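/- arXiv:1506.00515 — 5 statements merged into one kernel-verified Lean document; each statement's English description precedes it below -/
import Mathlib

section
/- Let α > 0 and 0 < β ≤ α + 1/2, and let b0 = (b_k)_{k≥1} be a real sequence with Q := Σ_{k=1}^∞ b_k² k^{2β} < ∞. Then for all sufficiently small ε > 0 there exists a sequence h = (h_k)_{k≥1} such that Σ_{k=1}^∞ (h_k − b_k)² ≤ ε² and Σ_{k=1}^∞ h_k² k^{1+2α} ≤ Q · ε^{(2β−2α−1)/β}. -/
set_option maxHeartbeats 1000000

open Set

/-- RKHS approximation: if `α > 0`, `0 < β ≤ α + 1/2` and `b0 = (b_k)` satisfies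
`Q = Σ b_k² k^{2β} < ∞` (sequences indexed so that `b k` is the coefficient of index `k+1`),
then for all small enough `ε > 0` there is a sequence `h` with `Σ (h_k - b_k)² ≤ ε²` and
`Σ h_k² k^{1+2α} ≤ Q ε^{(2β-2α-1)/β}`. -/
theorem stmt_1 (α β : ℝ) (hα : 0 < α) (hβ : 0 < β) (hβα : β ≤ α + 1/2)
    (b : ℕ → ℝ) (hb : Summable (fun k => (b k)^2 * ((k:ℝ)+1)^(2*β))) :
    ∃ ε0 > 0, ∀ ε : ℝ, 0 < ε → ε < ε0 →
      ∃ h : ℕ → ℝ,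
        (Summable fun k => (h k - b k)^2) ∧
        (∑' k : ℕ, (h k - b k)^2) ≤ ε^2 ∧
        (Summable fun k => (h k)^2 * ((k:ℝ)+1)^(1+2*α)) ∧
        (∑' k : ℕ, (h k)^2 * ((k:ℝ)+1)^(1+2*α))
          ≤ (∑' k : ℕ, (b k)^2 * ((k:ℝ)+1)^(2*β)) * ε^((2*β-2*α-1)/β) := by
  set f : ℕ → ℝ := fun k => (b k)^2 * ((k:ℝ)+1)^(2*β) with hfdef
  have hf0 : ∀ k, 0 ≤ f k := fun k => by positivity
  have hQ0 : 0 ≤ ∑' k, f k := tsum_nonneg hf0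
  have htail : Filter.Tendsto (fun n => ∑' k, f (k + n)) Filter.atTop (nhds 0) :=
    tendsto_sum_nat_add f
  have h4pos : (0:ℝ) < (4:ℝ)^(-β) := Real.rpow_pos_of_pos (by norm_num) _
  obtain ⟨N₀, hN₀⟩ : ∃ N₀, ∑' k, f (k + N₀) ≤ (4:ℝ)^(-β) := by
    have := (htail.eventually (eventually_le_nhds h4pos)).exists
    simpa using this
  set M : ℕ := max 2 (N₀ + 1) with hMdef
  have hMpos : (0:ℝ) < (M:ℝ) := by positivity
  refine ⟨(M:ℝ)^(-β), Real.rpow_pos_of_pos hMpos _, ?_⟩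
  intro ε hε hεM
  set x : ℝ := ε^(-(1/β)) with hxdef
  have hxpos : 0 < x := Real.rpow_pos_of_pos hε _
  have hMx : (M:ℝ) < x := by
    have h1 : ((M:ℝ)^(-β))^(-(1/β)) < ε^(-(1/β)) :=
      Real.rpow_lt_rpow_of_neg hε hεM (neg_lt_zero.mpr (by positivity))
    calc (M:ℝ) = ((M:ℝ)^(-β))^(-(1/β)) := by
          rw [← Real.rpow_mul hMpos.le]
          rw [show (-β) * (-(1/β)) = 1 by field_simp]
          simp
      _ < x := h1
  set N : ℕ := ⌊x⌋₊ with hNdef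
  have hMN : M ≤ N := Nat.le_floor hMx.le
  have hN2 : 2 ≤ N := le_trans (le_max_left _ _) hMN
  have hNN₀ : N₀ ≤ N := le_trans (Nat.le_of_succ_le (le_trans (le_max_right _ _) hMN)) (le_refl N)
  have hNpos : (0:ℝ) < (N:ℝ) := by
    have : (0:ℕ) < N := lt_of_lt_of_le (by norm_num) hN2
    exact_mod_cast this
  have hNx : (N:ℝ) ≤ x := Nat.floor_le hxpos.le
  have hxN : x ≤ 2 * N := by
    have h1 : x < N + 1 := Nat.lt_floor_add_one x
    have h2 : (1:ℝ) ≤ N := by exact_mod_cast le_trans (by norm_num) hN2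
    nlinarith
  clear_value N
  have hNβpos : (0:ℝ) < (N:ℝ)^(2*β) := Real.rpow_pos_of_pos hNpos _
  -- key pointwise bound for the error part
  have hkey : ∀ k, N ≤ k → (b k)^2 ≤ (N:ℝ)^(-(2*β)) * f k := by
    intro k hk
    have hk1 : (N:ℝ) ≤ (k:ℝ) + 1 := by
      have : (N:ℝ) ≤ (k:ℝ) := by exact_mod_cast hk
      linarith
    have h1 : (N:ℝ)^(2*β) ≤ ((k:ℝ)+1)^(2*β) :=
      Real.rpow_le_rpow hNpos.le hk1 (by positivity)
    rw [hfdef, Real.rpow_neg hNpos.le]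
    have h3 := mul_le_mul_of_nonneg_left ((one_le_div hNβpos).mpr h1) (sq_nonneg (b k))
    calc (b k)^2 = (b k)^2 * 1 := by ring
      _ ≤ (b k)^2 * (((k:ℝ)+1)^(2*β) / (N:ℝ)^(2*β)) := by simpa using h3
      _ = ((N:ℝ)^(2*β))⁻¹ * ((b k)^2 * ((k:ℝ)+1)^(2*β)) := by ring
  have herrle : ∀ k, ((if k < N then b k else 0) - b k)^2 ≤ (N:ℝ)^(-(2*β)) * f k := by
    intro k
    by_cases hk : k < N
    · rw [if_pos hk, sub_self]
      have h0 : (0:ℝ) ≤ (N:ℝ)^(-(2*β)) * f k :=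
        mul_nonneg (Real.rpow_pos_of_pos hNpos _).le (hf0 k)
      simpa using h0
    · simp only [hk, if_false, zero_sub, neg_sq]
      exact hkey k (not_lt.mp hk)
  have herrsummable : Summable fun k => ((if k < N then b k else 0) - b k)^2 :=
    Summable.of_nonneg_of_le (fun k => sq_nonneg _) herrle (hb.mul_left _)
  -- error bound
  have hshift : Summable fun k => f (k + N) := (summable_nat_add_iff N).mpr hb
  have herrtsum : (∑' k : ℕ, ((if k < N then b k else 0) - b k)^2)
      ≤ (N:ℝ)^(-(2*β)) * ∑' k, f (k + N) := by
    have heq := (Summable.sum_add_tsum_nat_add (f := fun k => ((if k < N then b k else 0) - b k)^2)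
      N herrsummable).symm
    have hzero : ∑ i ∈ Finset.range N, ((if i < N then b i else 0) - b i)^2 = 0 := by
      apply Finset.sum_eq_zero
      intro i hi
      simp [Finset.mem_range.mp hi]
    rw [heq, hzero, zero_add, ← tsum_mul_left]
    have hb2 : ∀ k : ℕ, ((if k + N < N then b (k + N) else 0) - b (k + N))^2
        ≤ (N:ℝ)^(-(2*β)) * f (k + N) := by
      intro k
      have hk : ¬ (k + N < N) := by omega
      rw [if_neg hk, zero_sub, neg_sq]
      exact hkey (k + N) (by omega)
    exact Summable.tsum_le_tsum hb2 ((summable_nat_add_iff N).mpr herrsummable) (hshift.mul_left _)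
  -- tail monotonicity
  have htailmono : (∑' k, f (k + N)) ≤ ∑' k, f (k + N₀) := by
    have hd : N = (N - N₀) + N₀ := by omega
    have hsplit := (Summable.sum_add_tsum_nat_add (f := fun k => f (k + N₀)) (N - N₀)
      ((summable_nat_add_iff N₀).mpr hb)).symm
    have hre : (fun k => f (k + (N - N₀) + N₀)) = fun k => f (k + N) := by
      funext k; congr 1; omega
    rw [hsplit]
    have h1 : 0 ≤ ∑ i ∈ Finset.range (N - N₀), f (i + N₀) :=
      Finset.sum_nonneg fun i _ => hf0 _
    have h2 : (∑' k, f (k + N)) = ∑' (k : ℕ), f (k + (N - N₀) + N₀) := by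
      rw [hre]
    linarith [h2 ▸ le_refl (∑' k, f (k + N))]
  -- numeric bound: N^{-2β} * 4^{-β} ≤ ε²
  have hNnum : (N:ℝ)^(-(2*β)) * (4:ℝ)^(-β) ≤ ε^2 := by
    have hx2 : x / 2 ≤ (N:ℝ) := by linarith
    have hx2pos : 0 < x / 2 := by linarith
    have h1 : (N:ℝ)^(-(2*β)) ≤ (x/2)^(-(2*β)) :=
      Real.rpow_le_rpow_of_nonpos hx2pos hx2 (by nlinarith)
    have h2 : (x/2)^(-(2*β)) = x^(-(2*β)) * (2:ℝ)^(2*β) := by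
      rw [Real.div_rpow hxpos.le (by norm_num : (0:ℝ) ≤ 2),
        Real.rpow_neg (by norm_num : (0:ℝ) ≤ 2), div_eq_mul_inv, inv_inv]
    have h3 : x^(-(2*β)) = ε^2 := by
      rw [hxdef, ← Real.rpow_mul hε.le]
      rw [show (-(1/β)) * (-(2*β)) = 2 by field_simp]
      rw [show (2:ℝ) = ((2:ℕ):ℝ) by norm_num, Real.rpow_natCast]
    have h4 : (2:ℝ)^(2*β) * (4:ℝ)^(-β) = 1 := by
      rw [show (4:ℝ) = (2:ℝ)^(2:ℕ) by norm_num, ← Real.rpow_natCast (2:ℝ) 2,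
        ← Real.rpow_mul (by norm_num), ← Real.rpow_add (by norm_num)]
      norm_num
    calc (N:ℝ)^(-(2*β)) * (4:ℝ)^(-β) ≤ (x/2)^(-(2*β)) * (4:ℝ)^(-β) :=
          mul_le_mul_of_nonneg_right h1 h4pos.le
      _ = ε^2 * ((2:ℝ)^(2*β) * (4:ℝ)^(-β)) := by rw [h2, h3]; ring
      _ = ε^2 := by rw [h4]; ring
  -- second sum: pointwise bound
  have hc : (0:ℝ) ≤ 1 + 2*α - 2*β := by linarith
  have hsle : ∀ k, (if k < N then b k else 0)^2 * ((k:ℝ)+1)^(1+2*α)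
      ≤ f k * (N:ℝ)^(1+2*α-2*β) := by
    intro k
    by_cases hk : k < N
    · simp only [hk, if_true]
      have hk1 : (0:ℝ) < (k:ℝ) + 1 := by positivity
      have hkN : (k:ℝ) + 1 ≤ (N:ℝ) := by exact_mod_cast Nat.succ_le_of_lt hk
      have h1 : ((k:ℝ)+1)^(1+2*α-2*β) ≤ (N:ℝ)^(1+2*α-2*β) :=
        Real.rpow_le_rpow hk1.le hkN hc
      have h2 : ((k:ℝ)+1)^(1+2*α) = ((k:ℝ)+1)^(2*β) * ((k:ℝ)+1)^(1+2*α-2*β) := by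
        rw [← Real.rpow_add hk1]; ring_nf
      rw [h2, hfdef]
      calc (b k)^2 * (((k:ℝ)+1)^(2*β) * ((k:ℝ)+1)^(1+2*α-2*β))
          = ((b k)^2 * ((k:ℝ)+1)^(2*β)) * ((k:ℝ)+1)^(1+2*α-2*β) := by ring
        _ ≤ ((b k)^2 * ((k:ℝ)+1)^(2*β)) * (N:ℝ)^(1+2*α-2*β) :=
            mul_le_mul_of_nonneg_left h1 (by positivity)
    · rw [if_neg hk]
      have h0 : (0:ℝ) ≤ f k * (N:ℝ)^(1+2*α-2*β) :=
        mul_nonneg (hf0 k) (Real.rpow_pos_of_pos hNpos _).le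
      simpa using h0
  have hssummable : Summable fun k => (if k < N then b k else 0)^2 * ((k:ℝ)+1)^(1+2*α) :=
    Summable.of_nonneg_of_le (fun k => by positivity) hsle (hb.mul_right _)
  refine ⟨fun k => if k < N then b k else 0, herrsummable, ?_, hssummable, ?_⟩
  · calc (∑' k : ℕ, ((if k < N then b k else 0) - b k)^2)
        ≤ (N:ℝ)^(-(2*β)) * ∑' k, f (k + N) := herrtsum
      _ ≤ (N:ℝ)^(-(2*β)) * ∑' k, f (k + N₀) :=
          mul_le_mul_of_nonneg_left htailmono (Real.rpow_pos_of_pos hNpos _).le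
      _ ≤ (N:ℝ)^(-(2*β)) * (4:ℝ)^(-β) :=
          mul_le_mul_of_nonneg_left hN₀ (Real.rpow_pos_of_pos hNpos _).le
      _ ≤ ε^2 := hNnum
  · have hNxle : (N:ℝ)^(1+2*α-2*β) ≤ x^(1+2*α-2*β) :=
      Real.rpow_le_rpow hNpos.le hNx hc
    have hxε : x^(1+2*α-2*β) = ε^((2*β-2*α-1)/β) := by
      rw [hxdef, ← Real.rpow_mul hε.le]
      congr 1
      field_simp
      ring
    calc (∑' k : ℕ, (if k < N then b k else 0)^2 * ((k:ℝ)+1)^(1+2*α))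
        ≤ ∑' k, f k * (N:ℝ)^(1+2*α-2*β) :=
          Summable.tsum_le_tsum hsle hssummable (hb.mul_right _)
      _ = (∑' k, f k) * (N:ℝ)^(1+2*α-2*β) := tsum_mul_right
      _ ≤ (∑' k, f k) * x^(1+2*α-2*β) := mul_le_mul_of_nonneg_left hNxle hQ0
      _ = (∑' k, f k) * ε^((2*β-2*α-1)/β) := by rw [hxε]
end

section
/- Let α > 0 and β ∈ (0, α + 1/2]. Let E be a standard exponential random variable independent of the iid standard normal sequence (Z_k)_{k≥1}, and for T > 0 set L = E^{1/2+α}/√T and W = (L k^{−1/2−α} Z_k)_{k≥1}. Then for every D > 0 there exist constants c, K > 0 and T0 > 0 such that for all T ≥ T0, taking ε_T = c T^{−β/(1+2β)} and R_T = K T^{(1/2+α−β)/(1+2β)}, one has P( W ∉ B_T ) ≤ 2 exp( −D T^{1/(1+2β)} ), where B_T = { (h_k + g_k)_{k≥1} : Σ_k h_k² k^{1+2α} ≤ R_T², Σ_k g_k² ≤ ε_T² }. -/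
/-!
Put `A = T^{1/(1+2β)}`, `M = ⌈A⌉` and `L² = E^{1+2α}/T`, and split `W` after its first `M`
coordinates: the head has squared Sobolev norm `L² Σ_{k<M} Z_k²` and the tail has squared
`L²` norm `L² Σ_{k≥M} (k+1)^{-1-2α} Z_k²`. So `W ∈ B_T` unless `E > (D+1)A`, or
`Σ_{k<M} Z_k² ≥ (4D+6)M`, or a partial tail sum reaches `(4D+4+1/α) M^{-2α}`. Each of these
events has probability at most `exp(-(D+1)A)`: the first by the exponential tail, the other
two by Chernoff bounds built on `E exp(tZ²) = (1-2t)^{-1/2} ≤ exp(2t)` for `0 ≤ t ≤ 1/4`,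
taken at `t = M^{1+2α}/4` for the tail, whose weights sum to at most `M^{-2α}/(2α)`.
As `A ≥ 1`, `3 exp(-(D+1)A) ≤ 2 exp(-DA)`.
-/

open MeasureTheory ProbabilityTheory Real Set
open scoped ENNReal

lemma sum_Ico_add_one_rpow_neg_le {p : ℝ} (hp : 0 < p) {M : ℕ} (hM : 1 ≤ M) (n : ℕ) :
    ∑ k ∈ Finset.Ico M n, ((k : ℝ) + 1) ^ (-(1 + p)) ≤ (M : ℝ) ^ (-p) / p := by
  have hM₀ : (0 : ℝ) < M := by exact_mod_cast hM
  obtain hnM | hMn := le_total n M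
  · rw [Finset.Ico_eq_empty_of_le hnM, Finset.sum_empty]
    positivity
  have hanti : AntitoneOn (fun x : ℝ ↦ x ^ (-(1 + p))) (Icc M n) := fun x hx y _ hxy ↦
    rpow_le_rpow_of_nonpos (hM₀.trans_le hx.1) hxy (by linarith)
  have hzero : (0 : ℝ) ∉ uIcc (M : ℝ) n := by
    rw [uIcc_of_le (by exact_mod_cast hMn)]
    exact fun h ↦ hM₀.not_ge h.1
  calc ∑ k ∈ Finset.Ico M n, ((k : ℝ) + 1) ^ (-(1 + p))
      ≤ ∫ x in (M : ℝ)..n, x ^ (-(1 + p)) := by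
        simpa only [Nat.cast_add, Nat.cast_one] using hanti.sum_le_integral_Ico hMn
    _ = ((M : ℝ) ^ (-p) - (n : ℝ) ^ (-p)) / p := by
        rw [integral_rpow (Or.inr ⟨by linarith, hzero⟩)]
        ring_nf
    _ ≤ (M : ℝ) ^ (-p) / p := by
        gcongr
        linarith [rpow_nonneg (Nat.cast_nonneg n) (-p)]

lemma expMeasure_one_compl_Icc_le {s : ℝ} (hs : 0 ≤ s) :
    expMeasure 1 (Icc 0 s)ᶜ ≤ ENNReal.ofReal (exp (-s)) := by
  have := isProbabilityMeasure_expMeasure zero_lt_one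
  have hneg : expMeasure 1 (Iic 0) = 0 := by
    rw [← ofReal_cdf, cdf_expMeasure_eq zero_lt_one]
    simp
  have htail : expMeasure 1 (Iic s)ᶜ = ENNReal.ofReal (exp (-s)) := by
    rw [prob_compl_eq_one_sub measurableSet_Iic, ← ofReal_cdf, cdf_expMeasure_eq zero_lt_one,
      if_pos hs, one_mul, ← ENNReal.ofReal_one, ← ENNReal.ofReal_sub _ (by
        linarith [exp_le_one_iff.mpr (neg_nonpos.mpr hs)]), sub_sub_cancel]
  calc expMeasure 1 (Icc 0 s)ᶜ ≤ expMeasure 1 (Iic 0 ∪ (Iic s)ᶜ) := by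
        refine measure_mono fun x hx ↦ ?_
        simp only [mem_compl_iff, mem_Icc, not_and_or, not_le, mem_union, mem_Iic] at hx ⊢
        rcases hx with h | h
        · exact Or.inl h.le
        · exact Or.inr h
    _ ≤ expMeasure 1 (Iic 0) + expMeasure 1 (Iic s)ᶜ := measure_union_le _ _
    _ = ENNReal.ofReal (exp (-s)) := by rw [hneg, htail, zero_add]

lemma measure_notMem_Icc_le_of_map_eq_expMeasure {Ω : Type*} [MeasurableSpace Ω] {P : Measure Ω}
    {E : Ω → ℝ} (hE : Measurable E) (hlaw : P.map E = expMeasure 1) {s : ℝ} (hs : 0 ≤ s) :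
    P {ω | E ω ∉ Icc 0 s} ≤ ENNReal.ofReal (exp (-s)) := by
  change P (E ⁻¹' (Icc 0 s)ᶜ) ≤ _
  rw [← Measure.map_apply hE measurableSet_Icc.compl, hlaw]
  exact expMeasure_one_compl_Icc_le hs

lemma gaussianPDFReal_mul_exp_mul_sq (t x : ℝ) :
    gaussianPDFReal 0 1 x * exp (t * x ^ 2) = (√(2 * π))⁻¹ * exp (-(1 / 2 - t) * x ^ 2) := by
  rw [gaussianPDFReal, mul_assoc, ← exp_add]
  push_cast
  ring_nf

lemma integrable_exp_mul_sq_gaussianReal {t : ℝ} (ht : t < 1 / 2) :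
    Integrable (fun x ↦ exp (t * x ^ 2)) (gaussianReal 0 1) := by
  rw [gaussianReal_of_var_ne_zero 0 one_ne_zero,
    integrable_withDensity_iff_integrable_smul' (measurable_gaussianPDF 0 1)
      (ae_of_all _ fun _ ↦ gaussianPDF_lt_top)]
  simp only [toReal_gaussianPDF, smul_eq_mul, gaussianPDFReal_mul_exp_mul_sq]
  exact (integrable_exp_neg_mul_sq (by linarith)).const_mul _

-- For `t ≥ 1/2` both sides are junk zeros: a non-integrable integrand and `√` of a negative.
lemma integral_exp_mul_sq_gaussianReal (t : ℝ) :
    ∫ x, exp (t * x ^ 2) ∂(gaussianReal 0 1) = √((1 - 2 * t)⁻¹) := by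
  simp only [integral_gaussianReal_eq_integral_smul one_ne_zero, smul_eq_mul,
    gaussianPDFReal_mul_exp_mul_sq, integral_const_mul, integral_gaussian]
  rw [← sqrt_inv, ← sqrt_mul (by positivity)]
  congr 1
  field_simp

lemma sqrt_inv_one_sub_two_mul_le_exp {t : ℝ} (ht₀ : 0 ≤ t) (ht : t ≤ 1 / 4) :
    √((1 - 2 * t)⁻¹) ≤ exp (2 * t) := by
  rw [sqrt_le_left (exp_pos _).le, ← exp_nat_mul, inv_le_iff_one_le_mul₀ (by linarith)]
  calc (1 : ℝ) ≤ (1 + 4 * t) * (1 - 2 * t) := by nlinarith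
    _ ≤ exp (↑2 * (2 * t)) * (1 - 2 * t) := by
      gcongr
      · linarith
      · linarith [add_one_le_exp (↑2 * (2 * t))]

section Chernoff

variable {Ω : Type*} [MeasurableSpace Ω] {P : Measure Ω}

lemma integrable_exp_mul_sq_of_map_eq_gaussianReal {X : Ω → ℝ} (hX : Measurable X)
    (hlaw : P.map X = gaussianReal 0 1) {t : ℝ} (ht : t < 1 / 2) :
    Integrable (fun ω ↦ exp (t * X ω ^ 2)) P := by
  have h := integrable_exp_mul_sq_gaussianReal ht
  rw [← hlaw] at h
  exact (integrable_map_measure (by fun_prop) hX.aemeasurable).mp h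

lemma mgf_sq_of_map_eq_gaussianReal {X : Ω → ℝ} (hX : Measurable X)
    (hlaw : P.map X = gaussianReal 0 1) (t : ℝ) :
    mgf (fun ω ↦ X ω ^ 2) P t = √((1 - 2 * t)⁻¹) := by
  rw [← integral_exp_mul_sq_gaussianReal, ← hlaw, integral_map hX.aemeasurable (by fun_prop),
    mgf]

variable [IsProbabilityMeasure P] {Z : ℕ → Ω → ℝ}

lemma measure_le_sum_mul_sq_le (hmeas : ∀ k, Measurable (Z k))
    (hlaw : ∀ k, P.map (Z k) = gaussianReal 0 1) (hindep : iIndepFun Z P) (s : Finset ℕ)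
    {b : ℕ → ℝ} {t : ℝ} (ht : 0 ≤ t) (hb₀ : ∀ k ∈ s, 0 ≤ b k)
    (hb : ∀ k ∈ s, t * b k ≤ 1 / 4)
    (v : ℝ) :
    P {ω | v ≤ ∑ k ∈ s, b k * Z k ω ^ 2}
      ≤ ENNReal.ofReal (exp (-t * (v - 2 * ∑ k ∈ s, b k))) := by
  set X : ℕ → Ω → ℝ := fun k ω ↦ b k * Z k ω ^ 2
  have hXmeas : ∀ k, Measurable (X k) := fun k ↦ by fun_prop
  have hXindep : iIndepFun X P := hindep.comp (fun k x ↦ b k * x ^ 2) (fun k ↦ by fun_prop)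
  have hint : ∀ k ∈ s, Integrable (fun ω ↦ exp (t * X k ω)) P := fun k hk ↦ by
    simpa only [X, ← mul_assoc] using
      integrable_exp_mul_sq_of_map_eq_gaussianReal (hmeas k) (hlaw k) (t := t * b k)
        (by linarith [hb k hk])
  have hmgf : ∀ k ∈ s, mgf (X k) P t ≤ exp (2 * (t * b k)) := fun k hk ↦ by
    rw [mgf_const_mul, mul_comm, mgf_sq_of_map_eq_gaussianReal (hmeas k) (hlaw k)]
    exact sqrt_inv_one_sub_two_mul_le_exp (mul_nonneg ht (hb₀ k hk)) (hb k hk)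
  have hset : {ω | v ≤ ∑ k ∈ s, b k * Z k ω ^ 2} = {ω | v ≤ (∑ k ∈ s, X k) ω} := by
    simp only [X, Finset.sum_apply]
  rw [hset, ← ofReal_measureReal]
  gcongr
  calc P.real {ω | v ≤ (∑ k ∈ s, X k) ω}
      ≤ exp (-t * v) * ∏ k ∈ s, mgf (X k) P t := by
        rw [← hXindep.mgf_sum hXmeas]
        exact measure_ge_le_exp_mul_mgf v ht (hXindep.integrable_exp_mul_sum hXmeas hint)
    _ ≤ exp (-t * v) * ∏ k ∈ s, exp (2 * (t * b k)) := by
        gcongr with k hk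
        · exact fun k _ ↦ mgf_nonneg
        · exact hmgf k hk
    _ = exp (-t * (v - 2 * ∑ k ∈ s, b k)) := by
        rw [← exp_sum, ← exp_add, ← Finset.mul_sum, ← Finset.mul_sum]
        ring_nf

lemma measure_exists_le_sum_Ico_mul_sq_le (hmeas : ∀ k, Measurable (Z k))
    (hlaw : ∀ k, P.map (Z k) = gaussianReal 0 1) (hindep : iIndepFun Z P) (M : ℕ)
    {b : ℕ → ℝ} {t S : ℝ} (ht : 0 ≤ t) (hb₀ : ∀ k, M ≤ k → 0 ≤ b k)
    (hb : ∀ k, M ≤ k → t * b k ≤ 1 / 4) (hS : ∀ n, ∑ k ∈ Finset.Ico M n, b k ≤ S)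
    (v : ℝ) :
    P {ω | ∃ n, v ≤ ∑ k ∈ Finset.Ico M n, b k * Z k ω ^ 2}
      ≤ ENNReal.ofReal (exp (-t * (v - 2 * S))) := by
  have hmono : Monotone fun n ↦ {ω | v ≤ ∑ k ∈ Finset.Ico M n, b k * Z k ω ^ 2} :=
    fun n m hnm ω hω ↦ hω.trans <| Finset.sum_le_sum_of_subset_of_nonneg
      (Finset.Ico_subset_Ico_right hnm)
      fun k hk _ ↦ mul_nonneg (hb₀ k (Finset.mem_Ico.mp hk).1) (sq_nonneg _)
  rw [ofPred_exists, hmono.measure_iUnion]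
  refine iSup_le fun n ↦ ?_
  refine (measure_le_sum_mul_sq_le hmeas hlaw hindep _ ht
    (fun k hk ↦ hb₀ k (Finset.mem_Ico.mp hk).1) (fun k hk ↦ hb k (Finset.mem_Ico.mp hk).1)
    v).trans ?_
  exact ENNReal.ofReal_le_ofReal (exp_le_exp.mpr (by nlinarith [hS n]))

lemma measure_le_sum_range_sq_le (hmeas : ∀ k, Measurable (Z k))
    (hlaw : ∀ k, P.map (Z k) = gaussianReal 0 1) (hindep : iIndepFun Z P) (M : ℕ) (r : ℝ) :
    P {ω | (4 * r + 2) * M ≤ ∑ k ∈ Finset.range M, Z k ω ^ 2}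
      ≤ ENNReal.ofReal (exp (-(r * M))) := by
  have h := measure_le_sum_mul_sq_le hmeas hlaw hindep (Finset.range M) (b := fun _ ↦ 1)
    (t := 1 / 4) (by norm_num) (fun _ _ ↦ zero_le_one) (fun _ _ ↦ by norm_num) ((4 * r + 2) * M)
  simp only [one_mul, Finset.sum_const, Finset.card_range, nsmul_eq_mul, mul_one] at h
  convert h using 4
  ring

lemma measure_exists_le_sum_Ico_rpow_mul_sq_le (hmeas : ∀ k, Measurable (Z k))
    (hlaw : ∀ k, P.map (Z k) = gaussianReal 0 1) (hindep : iIndepFun Z P) {p : ℝ} (hp : 0 < p)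
    {M : ℕ} (hM : 1 ≤ M) (r : ℝ) :
    P {ω | ∃ n, (4 * r + 2 / p) * (M : ℝ) ^ (-p)
        ≤ ∑ k ∈ Finset.Ico M n, ((k : ℝ) + 1) ^ (-(1 + p)) * Z k ω ^ 2}
      ≤ ENNReal.ofReal (exp (-(r * M))) := by
  have hM₀ : (0 : ℝ) < M := by exact_mod_cast hM
  -- `t = M^(1+p)/4` is the largest `t` with `t (k+1)^(-(1+p)) ≤ 1/4` for all `k ≥ M`.
  have hscale : (M : ℝ) ^ (1 + p) * (M : ℝ) ^ (-p) = M := by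
    rw [← rpow_add hM₀]; simp
  refine (measure_exists_le_sum_Ico_mul_sq_le hmeas hlaw hindep M (t := (M : ℝ) ^ (1 + p) / 4)
    (by positivity) (fun k _ ↦ by positivity) (fun k hk ↦ ?_)
    (sum_Ico_add_one_rpow_neg_le hp hM) _).trans_eq ?_
  · have hk : (M : ℝ) ≤ k + 1 := by exact_mod_cast hk.trans (Nat.le_succ k)
    calc (M : ℝ) ^ (1 + p) / 4 * ((k : ℝ) + 1) ^ (-(1 + p))
        ≤ (M : ℝ) ^ (1 + p) / 4 * (M : ℝ) ^ (-(1 + p)) :=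
          mul_le_mul_of_nonneg_left (rpow_le_rpow_of_nonpos hM₀ hk (by linarith))
            (by positivity)
      _ = 1 / 4 := by rw [rpow_neg hM₀.le]; field_simp
  · congr 2
    field_simp
    linear_combination (-4 * r * p) * hscale

end Chernoff

-- The sieve `B_T = R·H₁^{α+1/2} + ε·L²₁` is the case `w k = (k+1)^(1+2α)`.
def sobolevBallAddL2Ball (w : ℕ → ℝ) (R ε : ℝ) : Set (ℕ → ℝ) :=
  {x | ∃ h g : ℕ → ℝ, (∀ k, x k = h k + g k) ∧
    (Summable fun k ↦ h k ^ 2 * w k) ∧ (∑' k, h k ^ 2 * w k) ≤ R ^ 2 ∧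
    (Summable fun k ↦ g k ^ 2) ∧ (∑' k, g k ^ 2) ≤ ε ^ 2}

lemma sum_range_ite_lt_eq_sum_Ico {R : Type*} [AddCommMonoid R] (f : ℕ → R) (M n : ℕ) :
    ∑ k ∈ Finset.range n, (if k < M then 0 else f k) = ∑ k ∈ Finset.Ico M n, f k := by
  rw [Finset.sum_ite, Finset.sum_const_zero, zero_add]
  congr 1
  ext k
  simp only [Finset.mem_filter, Finset.mem_range, Finset.mem_Ico]
  omega

lemma mem_sobolevBallAddL2Ball_of_head_tail {x w : ℕ → ℝ} {R ε : ℝ} (M : ℕ)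
    (hhead : ∑ k ∈ Finset.range M, x k ^ 2 * w k ≤ R ^ 2)
    (htail : ∀ n, ∑ k ∈ Finset.Ico M n, x k ^ 2 ≤ ε ^ 2) :
    x ∈ sobolevBallAddL2Ball w R ε := by
  have hfin : ∀ k ∉ Finset.range M, (if k < M then x k else 0) ^ 2 * w k = 0 := fun k hk ↦ by
    simp [Finset.mem_range.not.mp hk]
  have hpartial : ∀ n, ∑ k ∈ Finset.range n, (if k < M then 0 else x k) ^ 2 ≤ ε ^ 2 :=
    fun n ↦ by
      simpa only [apply_ite (· ^ 2), zero_pow two_ne_zero, sum_range_ite_lt_eq_sum_Ico] using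
        htail n
  refine ⟨fun k ↦ if k < M then x k else 0, fun k ↦ if k < M then 0 else x k,
    fun k ↦ by by_cases hk : k < M <;> simp [hk], summable_of_ne_finset_zero hfin, ?_,
    summable_of_sum_range_le (fun _ ↦ sq_nonneg _) hpartial,
    tsum_le_of_sum_range_le (fun _ ↦ sq_nonneg _) hpartial⟩
  rw [tsum_eq_sum hfin]
  refine (Finset.sum_congr rfl fun k hk ↦ ?_).trans_le hhead
  rw [if_pos (Finset.mem_range.mp hk)]

lemma sq_mul_rpow_mul_eq {e T y : ℝ} (he : 0 ≤ e) (hT : 0 < T) (hy : 0 < y) (α z : ℝ) :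
    (e ^ (1 / 2 + α) / √T * y ^ (-(1 / 2) - α) * z) ^ 2
      = e ^ (1 + 2 * α) / T * (y ^ (-(1 + 2 * α)) * z ^ 2) := by
  rw [mul_pow, mul_pow, div_pow, ← rpow_mul_natCast he, ← rpow_mul_natCast hy.le,
    sq_sqrt hT.le]
  ring_nf

lemma rpow_one_div_rpow_div_self {T γ a b : ℝ} (hT : 0 < T) (hγ : γ ≠ 0)
    (hab : a = γ * (2 * b + 1)) :
    (T ^ (1 / γ)) ^ a / T = (T ^ b) ^ 2 := by
  rw [← rpow_mul hT.le, ← rpow_sub_one hT.ne', ← rpow_mul_natCast hT.le, hab]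
  congr 1
  field_simp
  ring

lemma mem_sobolevBallAddL2Ball_of_bounds {α β r T e : ℝ} {z : ℕ → ℝ} {M : ℕ}
    (hα : 0 < α) (hβ : 0 < β) (hr : 0 ≤ r) (hT : 0 < T)
    (hAM : T ^ (1 / (1 + 2 * β)) ≤ M) (hMA : (M : ℝ) ≤ 2 * T ^ (1 / (1 + 2 * β)))
    (he : e ∈ Icc 0 (r * T ^ (1 / (1 + 2 * β))))
    (hhead : ∑ k ∈ Finset.range M, z k ^ 2 ≤ (4 * r + 2) * M)
    (htail : ∀ n, ∑ k ∈ Finset.Ico M n, ((k : ℝ) + 1) ^ (-(1 + 2 * α)) * z k ^ 2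
      ≤ (4 * r + 2 / (2 * α)) * (M : ℝ) ^ (-(2 * α))) :
    (fun k : ℕ ↦ e ^ (1 / 2 + α) / √T * ((k : ℝ) + 1) ^ (-(1 / 2) - α) * z k) ∈
      sobolevBallAddL2Ball (fun k ↦ ((k : ℝ) + 1) ^ (1 + 2 * α))
        (√(r ^ (1 + 2 * α) * (2 * (4 * r + 2))) * T ^ ((1 / 2 + α - β) / (1 + 2 * β)))
        (√(r ^ (1 + 2 * α) * (4 * r + 2 / (2 * α))) * T ^ (-β / (1 + 2 * β))) := by
  set A := T ^ (1 / (1 + 2 * β))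
  have hA : 0 < A := by positivity
  have hγ : 1 + 2 * β ≠ 0 := by positivity
  have hscale : e ^ (1 + 2 * α) / T ≤ r ^ (1 + 2 * α) * A ^ (1 + 2 * α) / T := by
    rw [← mul_rpow hr hA.le]
    gcongr
    exacts [he.1, he.2]
  have hsq : ∀ k : ℕ, (e ^ (1 / 2 + α) / √T * ((k : ℝ) + 1) ^ (-(1 / 2) - α) * z k) ^ 2
      = e ^ (1 + 2 * α) / T * (((k : ℝ) + 1) ^ (-(1 + 2 * α)) * z k ^ 2) :=
    fun k ↦ sq_mul_rpow_mul_eq he.1 hT (by positivity) α (z k)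
  refine mem_sobolevBallAddL2Ball_of_head_tail M ?_ fun n ↦ ?_
  · calc _ = e ^ (1 + 2 * α) / T * ∑ k ∈ Finset.range M, z k ^ 2 := by
          rw [Finset.mul_sum]
          refine Finset.sum_congr rfl fun k _ ↦ ?_
          rw [hsq, rpow_neg (by positivity)]
          field_simp
      _ ≤ r ^ (1 + 2 * α) * A ^ (1 + 2 * α) / T * ((4 * r + 2) * (2 * A)) := by
          gcongr
          exact hhead.trans (by gcongr)
      _ = _ := by
          rw [mul_pow, sq_sqrt (by positivity), ← rpow_one_div_rpow_div_self hT hγ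
            (a := 2 + 2 * α) (by field_simp; ring), show 2 + 2 * α = 1 + 2 * α + 1 by ring,
            rpow_add_one hA.ne']
          ring
  · calc _ = e ^ (1 + 2 * α) / T
          * ∑ k ∈ Finset.Ico M n, ((k : ℝ) + 1) ^ (-(1 + 2 * α)) * z k ^ 2 := by
          rw [Finset.mul_sum]
          exact Finset.sum_congr rfl fun k _ ↦ hsq k
      _ ≤ r ^ (1 + 2 * α) * A ^ (1 + 2 * α) / T
          * ((4 * r + 2 / (2 * α)) * A ^ (-(2 * α))) := by
          gcongr
          refine (htail n).trans (mul_le_mul_of_nonneg_left ?_ (by positivity))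
          exact rpow_le_rpow_of_nonpos hA hAM (by linarith)
      _ = _ := by
          rw [mul_pow, sq_sqrt (by positivity), ← rpow_one_div_rpow_div_self hT hγ
            (a := 1) (by field_simp; ring), rpow_one]
          have hA1 : A ^ (1 + 2 * α) * A ^ (-(2 * α)) = A := by rw [← rpow_add hA]; simp
          linear_combination (r ^ (1 + 2 * α) * (4 * r + 2 / (2 * α)) / T) * hA1

lemma add_add_le_ofReal_two_mul_exp {a b c : ℝ≥0∞} {D A : ℝ} (hA : 1 ≤ A)
    (ha : a ≤ ENNReal.ofReal (exp (-((D + 1) * A))))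
    (hb : b ≤ ENNReal.ofReal (exp (-((D + 1) * A))))
    (hc : c ≤ ENNReal.ofReal (exp (-((D + 1) * A)))) :
    a + b + c ≤ ENNReal.ofReal (2 * exp (-D * A)) := by
  have hsplit : exp (-((D + 1) * A)) = exp (-D * A) * exp (-A) := by rw [← exp_add]; ring_nf
  have hA' : exp (-A) < 1 / 2 := (exp_le_exp.mpr (by linarith)).trans_lt exp_neg_one_lt_half
  refine (add_le_add_three ha hb hc).trans ?_
  rw [← ENNReal.ofReal_add (by positivity) (by positivity),
    ← ENNReal.ofReal_add (by positivity) (by positivity)]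
  refine ENNReal.ofReal_le_ofReal ?_
  rw [hsplit]
  nlinarith [exp_pos (-D * A)]

theorem stmt_6_general {Ω : Type*} [MeasurableSpace Ω] (P : Measure Ω) [IsProbabilityMeasure P]
    (Z : ℕ → Ω → ℝ) (hmeas : ∀ k, Measurable (Z k))
    (hlaw : ∀ k, Measure.map (Z k) P = gaussianReal 0 1)
    (hindep : iIndepFun Z P)
    (E : Ω → ℝ) (hEmeas : Measurable E)
    (hElaw : Measure.map E P = expMeasure 1)
    (α β : ℝ) (hα : 0 < α) (hβ : 0 < β) :
    ∀ D > 0, ∃ c > 0, ∃ K > 0, ∃ T0 > 0, ∀ T ≥ T0,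
      P {ω | (fun k : ℕ =>
            (E ω)^(1/2+α) / Real.sqrt T * ((k:ℝ)+1)^(-(1/2)-α) * Z k ω) ∉
          {x : ℕ → ℝ | ∃ h g : ℕ → ℝ, (∀ k, x k = h k + g k) ∧
            (Summable fun k => (h k)^2 * ((k:ℝ)+1)^(1+2*α)) ∧
            (∑' k : ℕ, (h k)^2 * ((k:ℝ)+1)^(1+2*α)) ≤ (K * T^((1/2+α-β)/(1+2*β)))^2 ∧
            (Summable fun k => (g k)^2) ∧
            (∑' k : ℕ, (g k)^2) ≤ (c * T^(-β/(1+2*β)))^2}}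
        ≤ ENNReal.ofReal (2 * Real.exp (-D * T^(1/(1+2*β)))) := by
  intro D hD
  refine ⟨√((D + 1) ^ (1 + 2 * α) * (4 * (D + 1) + 2 / (2 * α))), by positivity,
    √((D + 1) ^ (1 + 2 * α) * (2 * (4 * (D + 1) + 2))), by positivity, 1, one_pos,
    fun T hT ↦ ?_⟩
  set A := T ^ (1 / (1 + 2 * β))
  have hA : 1 ≤ A := one_le_rpow hT (by positivity)
  set M := ⌈A⌉₊
  have hAM : A ≤ M := Nat.le_ceil A
  have hMA : (M : ℝ) ≤ 2 * A := by linarith [Nat.ceil_lt_add_one (zero_le_one.trans hA)]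
  have hM : 1 ≤ M := by exact_mod_cast hA.trans hAM
  set badE := {ω | E ω ∉ Icc 0 ((D + 1) * A)}
  set badHead := {ω | (4 * (D + 1) + 2) * M ≤ ∑ k ∈ Finset.range M, Z k ω ^ 2}
  set badTail := {ω | ∃ n, (4 * (D + 1) + 2 / (2 * α)) * (M : ℝ) ^ (-(2 * α))
    ≤ ∑ k ∈ Finset.Ico M n, ((k : ℝ) + 1) ^ (-(1 + 2 * α)) * Z k ω ^ 2}
  have hexp : ENNReal.ofReal (exp (-((D + 1) * M))) ≤ ENNReal.ofReal (exp (-((D + 1) * A))) := by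
    gcongr
  calc _ ≤ P (badE ∪ badHead ∪ badTail) := measure_mono fun ω hω ↦ by
        contrapose! hω
        simp only [badE, badHead, badTail, mem_union, mem_ofPred_eq, not_or, not_le,
          not_exists, not_not] at hω
        exact fun hnot ↦ hnot <| mem_sobolevBallAddL2Ball_of_bounds hα hβ (by positivity)
          (by positivity) hAM hMA hω.1.1 hω.1.2.le fun n ↦ (hω.2 n).le
    _ ≤ P badE + P badHead + P badTail :=
        (measure_union_le _ _).trans (by gcongr; exact measure_union_le _ _)
    _ ≤ ENNReal.ofReal (2 * exp (-D * A)) :=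
        add_add_le_ofReal_two_mul_exp hA
          (measure_notMem_Icc_le_of_map_eq_expMeasure hEmeas hElaw (by positivity))
          ((measure_le_sum_range_sq_le hmeas hlaw hindep M (D + 1)).trans hexp)
          ((measure_exists_le_sum_Ico_rpow_mul_sq_le hmeas hlaw hindep (p := 2 * α)
            (by positivity) hM (D + 1)).trans hexp)

/-- Remaining mass bound for the hierarchical prior with random scale `L = E^{1/2+α}/√T`:
for every `D > 0` there are `c, K, T0 > 0` such that for all `T ≥ T0`, with
`ε_T = c T^{-β/(1+2β)}` and `R_T = K T^{(1/2+α-β)/(1+2β)}`,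
`P(W ∉ B_T) ≤ 2 exp(-D T^{1/(1+2β)})`, where `B_T = R_T·H₁^{α+1/2} + ε_T·L²₁`. -/
theorem stmt_6 {Ω : Type*} [MeasurableSpace Ω] (P : Measure Ω) [IsProbabilityMeasure P]
    (Z : ℕ → Ω → ℝ) (hmeas : ∀ k, Measurable (Z k))
    (hlaw : ∀ k, Measure.map (Z k) P = gaussianReal 0 1)
    (hindep : iIndepFun Z P)
    (E : Ω → ℝ) (hEmeas : Measurable E)
    (hElaw : Measure.map E P = expMeasure 1)
    (hEZ : IndepFun E (fun ω => fun k => Z k ω) P)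
    (α β : ℝ) (hα : 0 < α) (hβ : 0 < β) (hβα : β ≤ α + 1/2) :
    ∀ D > 0, ∃ c > 0, ∃ K > 0, ∃ T0 > 0, ∀ T ≥ T0,
      P {ω | (fun k : ℕ =>
            (E ω)^(1/2+α) / Real.sqrt T * ((k:ℝ)+1)^(-(1/2)-α) * Z k ω) ∉
          {x : ℕ → ℝ | ∃ h g : ℕ → ℝ, (∀ k, x k = h k + g k) ∧
            (Summable fun k => (h k)^2 * ((k:ℝ)+1)^(1+2*α)) ∧
            (∑' k : ℕ, (h k)^2 * ((k:ℝ)+1)^(1+2*α)) ≤ (K * T^((1/2+α-β)/(1+2*β)))^2 ∧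
            (Summable fun k => (g k)^2) ∧
            (∑' k : ℕ, (g k)^2) ≤ (c * T^(-β/(1+2*β)))^2}}
        ≤ ENNReal.ofReal (2 * Real.exp (-D * T^(1/(1+2*β)))) :=
  stmt_6_general P Z hmeas hlaw hindep E hEmeas hElaw α β hα hβ
end

section
/- For every α > 0 there exists a constant C > 0 such that for all R > 0 and all ε > 0, there is a finite set S of square-summable sequences with cardinality at most exp( C (R/ε)^{2/(1+2α)} ) such that every element of the set B = { (h_k + g_k)_{k≥1} : Σ_k h_k² k^{1+2α} ≤ R², Σ_k g_k² ≤ ε² } is within ℓ²-distance 2ε of some element of S. Equivalently, log N(2ε, B, ‖·‖₂) ≤ C (R/ε)^{2/(1+2α)}. -/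
/-
Up to an ℓ²-error ε/√2, a sequence in the Sobolev ball `Σ h_k² (k+1)^{1+2α} ≤ R²` is determined
by its first `K ≍ (R/ε)^{2/(1+2α)}` coordinates, and these lie in the ellipsoid with semi-axes
`R (i+1)^{-(α+1/2)}`. A maximal ε/√2-separated subset of this ellipsoid is a cover. The balls of
half that radius around its points are disjoint and fit in the ellipsoid with semi-axes
`√2 (R (i+1)^{-(α+1/2)} + ε/(2√2))`, so comparing volumes bounds its size by
`∏_{i<K} 2(1 + 2√2 R / (ε (i+1)^{α+1/2}))`, whose logarithm is `O(K)` by `log(1+u) ≤ s u^{1/s}`.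
The perturbation `g` costs only a factor 2 through `(a+b)² ≤ 2a² + 2b²`.
-/

open Metric MeasureTheory Finset
open scoped ENNReal NNReal

lemma packingNumber_le_of_forall_ncard_le {X : Type*} [PseudoEMetricSpace X] {A : Set X}
    {ε : ℝ≥0} {M : ℕ} (h : ∀ C ⊆ A, C.Finite → IsSeparated ε C → C.ncard ≤ M) :
    packingNumber ε A ≤ M := by
  refine iSup_le fun C => iSup_le fun hCA => iSup_le fun hsep => ?_
  by_cases hC : C.Finite
  · rw [← hC.cast_ncard_eq]
    exact_mod_cast h C hCA hC hsep
  · obtain ⟨t, htC, ht, htM⟩ := Set.Infinite.exists_subset_ncard_eq hC (M + 1)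
    have := h t (htC.trans hCA) ht (hsep.subset htC)
    omega

lemma exists_finset_isCover_of_packingNumber_le {X : Type*} [PseudoEMetricSpace X] {A : Set X}
    {ε : ℝ≥0} {M : ℕ} (h : packingNumber ε A ≤ M) :
    ∃ N : Finset X, N.card ≤ M ∧ IsCover ε A N := by
  have hM : packingNumber ε A ≠ ⊤ := ne_top_of_le_ne_top (ENat.natCast_ne_top M) h
  have hfin : (maximalSeparatedSet ε A).Finite :=
    Set.encard_ne_top_iff.1 (encard_maximalSeparatedSet hM ▸ hM)
  refine ⟨hfin.toFinset, ?_, by simpa using isCover_maximalSeparatedSet hM⟩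
  rw [← Set.ncard_eq_toFinset_card _ hfin]
  exact (Set.encard_le_coe_iff_finite_ncard_le.1 (encard_maximalSeparatedSet hM ▸ h)).2

lemma ncard_mul_measure_ball_le {E : Type*} [NormedAddCommGroup E] [MeasurableSpace E]
    [BorelSpace E] (μ : Measure E) [μ.IsAddHaarMeasure] {C T : Set E} {δ : ℝ≥0}
    (hC : C.Finite) (hsep : IsSeparated δ C) (hT : ∀ p ∈ C, ball p (δ / 2) ⊆ T) :
    C.ncard * μ (ball 0 (δ / 2)) ≤ μ T := by
  have hdisj : (hC.toFinset : Set E).PairwiseDisjoint fun p => ball p (δ / 2) := by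
    intro p hp q hq hpq
    refine ball_disjoint_ball ?_
    have : (δ : ℝ≥0∞) < edist p q := hsep (by simpa using hp) (by simpa using hq) hpq
    rw [edist_nndist, ENNReal.coe_lt_coe, ← NNReal.coe_lt_coe, coe_nndist] at this
    linarith
  calc (C.ncard : ℝ≥0∞) * μ (ball 0 (δ / 2))
      = ∑ p ∈ hC.toFinset, μ (ball p (δ / 2)) := by
        simp [Measure.addHaar_ball_center, Set.ncard_eq_toFinset_card _ hC]
    _ = μ (⋃ p ∈ hC.toFinset, ball p (δ / 2)) :=
        (measure_biUnion_finset hdisj fun p _ => measurableSet_ball).symm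
    _ ≤ μ T := measure_mono (Set.iUnion₂_subset fun p hp => hT p (by simpa using hp))

section Ellipsoid

variable {ι : Type*} [Fintype ι]

def ellipsoid (r : ι → ℝ) : Set (EuclideanSpace ℝ ι) := {y | ∑ i, (y i / r i) ^ 2 ≤ 1}

lemma ellipsoid_eq_preimage_closedBall [DecidableEq ι] (r : ι → ℝ) :
    ellipsoid r =
      Matrix.toEuclideanLin (Matrix.diagonal fun i => (r i)⁻¹) ⁻¹' closedBall 0 1 := by
  ext y
  simp [ellipsoid, ← sq_le_one_iff₀ (norm_nonneg _), EuclideanSpace.norm_sq_eq,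
    Matrix.toLpLin_apply, Matrix.mulVec_diagonal, div_eq_inv_mul, mul_pow, inv_pow, sq_abs]

lemma volume_ellipsoid {r : ι → ℝ} (hr : ∀ i, 0 < r i) :
    volume (ellipsoid r) =
      ENNReal.ofReal (∏ i, r i) * volume (ball (0 : EuclideanSpace ℝ ι) 1) := by
  classical
  have hdet : LinearMap.det (Matrix.toEuclideanLin (Matrix.diagonal fun i => (r i)⁻¹)) =
      ∏ i, (r i)⁻¹ := by
    rw [Matrix.toEuclideanLin_eq_toLin_orthonormal, LinearMap.det_toLin, Matrix.det_diagonal]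
  rw [ellipsoid_eq_preimage_closedBall, Measure.addHaar_preimage_linearMap _ (by
      rw [hdet]; exact prod_ne_zero_iff.2 fun i _ => (inv_pos.2 (hr i)).ne'),
    hdet, prod_inv_distrib, inv_inv, abs_of_pos (prod_pos fun i _ => hr i),
    Measure.addHaar_closedBall _ _ zero_le_one, one_pow, ENNReal.ofReal_one, one_mul]

lemma sq_add_div_add_le {a b r d : ℝ} (hr : 0 < r) (hd : 0 < d) :
    ((a + b) / (r + d)) ^ 2 ≤ (a / r) ^ 2 + (b / d) ^ 2 := by
  obtain ⟨x, rfl⟩ : ∃ x, a = r * x := ⟨a / r, by field_simp⟩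
  obtain ⟨y, rfl⟩ : ∃ y, b = d * y := ⟨b / d, by field_simp⟩
  rw [mul_div_cancel_left₀ _ hr.ne', mul_div_cancel_left₀ _ hd.ne', div_pow,
    div_le_iff₀ (by positivity)]
  nlinarith [sq_nonneg (r * y - d * x), mul_pos hr hd, sq_nonneg x, sq_nonneg y]

-- The factor `√2` is needed: the `d`-neighbourhood of `ellipsoid r` need not lie in the
-- ellipsoid with semi-axes `r i + d`.
lemma ball_subset_ellipsoid {r : ι → ℝ} (hr : ∀ i, 0 < r i) {d : ℝ} (hd : 0 < d)
    {p : EuclideanSpace ℝ ι} (hp : p ∈ ellipsoid r) :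
    ball p d ⊆ ellipsoid fun i => √2 * (r i + d) := by
  intro z hz
  have hzp : ∑ i, ((z i - p i) / d) ^ 2 ≤ 1 := by
    have hdist : dist z p ^ 2 = ∑ i, (z i - p i) ^ 2 := by
      simp [dist_eq_norm, EuclideanSpace.norm_sq_eq, sq_abs]
    simp_rw [div_pow, ← sum_div, ← hdist]
    rw [div_le_one (by positivity)]
    exact pow_le_pow_left₀ dist_nonneg (mem_ball.1 hz).le 2
  have hcoord (i : ι) :
      (z i / (√2 * (r i + d))) ^ 2 ≤ ((p i / r i) ^ 2 + ((z i - p i) / d) ^ 2) / 2 := by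
    have := sq_add_div_add_le (a := p i) (b := z i - p i) (hr i) hd
    rw [add_sub_cancel] at this
    rw [mul_comm, ← div_div, div_pow _ √2, Real.sq_sqrt zero_le_two]
    gcongr
  calc ∑ i, (z i / (√2 * (r i + d))) ^ 2
      ≤ ∑ i, ((p i / r i) ^ 2 + ((z i - p i) / d) ^ 2) / 2 := sum_le_sum fun i _ => hcoord i
    _ = ((∑ i, (p i / r i) ^ 2) + ∑ i, ((z i - p i) / d) ^ 2) / 2 := by
        rw [← sum_div, sum_add_distrib]
    _ ≤ 1 := by linarith [show ∑ i, (p i / r i) ^ 2 ≤ 1 from hp]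

lemma ncard_le_prod_of_isSeparated_of_subset_ellipsoid {r : ι → ℝ} (hr : ∀ i, 0 < r i)
    {δ : ℝ≥0} (hδ : 0 < δ) {C : Set (EuclideanSpace ℝ ι)} (hC : C.Finite)
    (hCr : C ⊆ ellipsoid r) (hsep : IsSeparated δ C) :
    (C.ncard : ℝ) ≤ ∏ i, 2 * (1 + 2 * r i / δ) := by
  set d : ℝ := δ / 2
  have hd : 0 < d := by positivity
  have hvol := ncard_mul_measure_ball_le volume hC hsep fun p hp =>
    ball_subset_ellipsoid hr hd (hCr hp)
  rw [volume_ellipsoid fun i => by have := hr i; positivity,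
    Measure.addHaar_ball_of_pos _ _ hd, finrank_euclideanSpace, ← mul_assoc] at hvol
  have hB : volume (ball (0 : EuclideanSpace ℝ ι) 1) ≠ 0 := (measure_ball_pos _ _ one_pos).ne'
  have hvol' : (C.ncard : ℝ) * d ^ Fintype.card ι ≤ ∏ i, √2 * (r i + d) := by
    have := (ENNReal.mul_le_mul_iff_left hB measure_ball_lt_top.ne).1 hvol
    rwa [← ENNReal.ofReal_natCast, ← ENNReal.ofReal_mul (by positivity),
      ENNReal.ofReal_le_ofReal_iff (prod_nonneg fun i _ => by have := hr i; positivity)] at this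
  calc (C.ncard : ℝ) ≤ (∏ i, √2 * (r i + d)) / d ^ Fintype.card ι := by
        rw [le_div_iff₀ (by positivity)]; exact hvol'
    _ = ∏ i, √2 * (1 + 2 * r i / δ) := by
        rw [← card_univ, ← prod_const, ← prod_div_distrib]
        refine prod_congr rfl fun i _ => ?_
        field_simp
        ring
    _ ≤ ∏ i, 2 * (1 + 2 * r i / δ) := by
        have hsqrt : √2 ≤ 2 := Real.sqrt_le_iff.2 ⟨zero_le_two, by norm_num⟩
        refine prod_le_prod (fun i _ => ?_) fun i _ => ?_
        · have := hr i; positivity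
        · have := hr i; gcongr

lemma exists_finset_isCover_ellipsoid {r : ι → ℝ} (hr : ∀ i, 0 < r i) {δ : ℝ≥0}
    (hδ : 0 < δ) :
    ∃ P : Finset (EuclideanSpace ℝ ι),
      (P.card : ℝ) ≤ ∏ i, 2 * (1 + 2 * r i / δ) ∧ IsCover δ (ellipsoid r) P := by
  obtain ⟨P, hP, hcover⟩ := exists_finset_isCover_of_packingNumber_le (A := ellipsoid r)
    (packingNumber_le_of_forall_ncard_le fun C hCr hC hsep =>
      Nat.le_floor (ncard_le_prod_of_isSeparated_of_subset_ellipsoid hr hδ hC hCr hsep))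
  refine ⟨P, (Nat.cast_le.2 hP).trans (Nat.floor_le ?_), hcover⟩
  exact prod_nonneg fun i _ => by have := hr i; positivity

end Ellipsoid

lemma one_add_le_exp_rpow_div {u θ : ℝ} (hu : 0 ≤ u) (hθ : 0 < θ) (hθ1 : θ ≤ 1) :
    1 + u ≤ Real.exp (u ^ θ / θ) :=
  calc 1 + u = ((1 + u) ^ θ) ^ θ⁻¹ := (Real.rpow_rpow_inv (by positivity) hθ.ne').symm
    _ ≤ (u ^ θ + 1) ^ θ⁻¹ := by
        gcongr
        simpa [add_comm] using Real.rpow_add_le_add_rpow zero_le_one hu hθ.le hθ1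
    _ ≤ Real.exp (u ^ θ) ^ θ⁻¹ := by gcongr; exact Real.add_one_le_exp _
    _ = Real.exp (u ^ θ / θ) := by rw [← Real.exp_mul, div_eq_mul_inv]

lemma sum_range_inv_sqrt_le (K : ℕ) : ∑ i ∈ range K, 1 / √((i : ℝ) + 1) ≤ 2 * √K := by
  have hterm (i : ℕ) : 1 / √((i : ℝ) + 1) ≤ 2 * √((i + 1 : ℕ) : ℝ) - 2 * √(i : ℝ) := by
    have hi : 0 < √((i : ℝ) + 1) := Real.sqrt_pos.2 (by positivity)
    rw [div_le_iff₀ hi, Nat.cast_succ]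
    nlinarith [sq_nonneg (√((i : ℝ) + 1) - √(i : ℝ)),
      Real.sq_sqrt (Nat.cast_nonneg (α := ℝ) i), Real.sq_sqrt (by positivity : (0 : ℝ) ≤ i + 1)]
  calc ∑ i ∈ range K, 1 / √((i : ℝ) + 1)
      ≤ ∑ i ∈ range K, (2 * √((i + 1 : ℕ) : ℝ) - 2 * √(i : ℝ)) :=
        sum_le_sum fun i _ => hterm i
    _ = 2 * √K := by rw [sum_range_sub (fun i : ℕ => 2 * √(i : ℝ))]; simp

lemma prod_range_one_add_div_rpow_le_exp {s t : ℝ} (hs : 1 ≤ s) (ht : 0 ≤ t) (K : ℕ) :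
    ∏ i ∈ range K, (1 + t / ((i : ℝ) + 1) ^ (s / 2)) ≤ Real.exp (2 * s * t ^ s⁻¹ * √K) := by
  have hs0 : 0 < s := by linarith
  have hfactor (i : ℕ) :
      1 + t / ((i : ℝ) + 1) ^ (s / 2) ≤ Real.exp (s * t ^ s⁻¹ * (1 / √((i : ℝ) + 1))) := by
    refine (one_add_le_exp_rpow_div (by positivity) (inv_pos.2 hs0)
      (inv_le_one_of_one_le₀ hs)).trans_eq ?_
    rw [Real.div_rpow ht (by positivity), ← Real.rpow_mul (by positivity),
      show s / 2 * s⁻¹ = 1 / 2 by field_simp, ← Real.sqrt_eq_rpow]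
    field_simp
  calc ∏ i ∈ range K, (1 + t / ((i : ℝ) + 1) ^ (s / 2))
      ≤ ∏ i ∈ range K, Real.exp (s * t ^ s⁻¹ * (1 / √((i : ℝ) + 1))) :=
        prod_le_prod (fun i _ => by positivity) fun i _ => hfactor i
    _ = Real.exp (s * t ^ s⁻¹ * ∑ i ∈ range K, 1 / √((i : ℝ) + 1)) := by
        rw [← Real.exp_sum, mul_sum]
    _ ≤ Real.exp (s * t ^ s⁻¹ * (2 * √K)) := by gcongr; exact sum_range_inv_sqrt_le K
    _ = Real.exp (2 * s * t ^ s⁻¹ * √K) := by ring_nf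

lemma summable_sq_add {a b : ℕ → ℝ} (ha : Summable fun k => a k ^ 2)
    (hb : Summable fun k => b k ^ 2) : Summable fun k => (a k + b k) ^ 2 :=
  ((ha.add hb).mul_left 2).of_nonneg_of_le (fun _ => sq_nonneg _) fun _ => add_sq_le

lemma tsum_sq_add_le {a b : ℕ → ℝ} (ha : Summable fun k => a k ^ 2)
    (hb : Summable fun k => b k ^ 2) :
    ∑' k, (a k + b k) ^ 2 ≤ 2 * (∑' k, a k ^ 2 + ∑' k, b k ^ 2) := by
  rw [← ha.tsum_add hb, ← tsum_mul_left]
  exact (summable_sq_add ha hb).tsum_le_tsum (fun _ => add_sq_le) ((ha.add hb).mul_left 2)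

def zeroExtend {K : ℕ} (p : EuclideanSpace ℝ (Fin K)) (k : ℕ) : ℝ :=
  if hk : k < K then p ⟨k, hk⟩ else 0

lemma summable_sq_zeroExtend {K : ℕ} (p : EuclideanSpace ℝ (Fin K)) :
    Summable fun k => zeroExtend p k ^ 2 :=
  summable_of_ne_finset_zero (s := range K) fun k hk => by simp_all [zeroExtend]

lemma hasSum_sq_sub_zeroExtend {K : ℕ} {h : ℕ → ℝ} (hh : Summable fun k => h k ^ 2)
    (p : EuclideanSpace ℝ (Fin K)) :
    HasSum (fun k => (h k - zeroExtend p k) ^ 2)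
      (dist (WithLp.toLp 2 fun i : Fin K => h i) p ^ 2 + ∑' k, h (k + K) ^ 2) := by
  have htail : (fun k => (h (k + K) - zeroExtend p (k + K)) ^ 2) = fun k => h (k + K) ^ 2 := by
    ext k; simp [zeroExtend]
  have hhead : ∑ k ∈ range K, (h k - zeroExtend p k) ^ 2 =
      dist (WithLp.toLp 2 fun i : Fin K => h i) p ^ 2 := by
    rw [EuclideanSpace.dist_eq, Real.sq_sqrt (by positivity), ← Fin.sum_univ_eq_sum_range]
    simp [zeroExtend, Real.dist_eq, sq_abs]
  rw [← hhead, add_comm, ← hasSum_nat_add_iff, htail]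
  exact ((summable_nat_add_iff K).2 hh).hasSum

def sobolevBall (s R : ℝ) : Set (ℕ → ℝ) :=
  {h | Summable (fun k => h k ^ 2 * ((k : ℝ) + 1) ^ s) ∧
    ∑' k, h k ^ 2 * ((k : ℝ) + 1) ^ s ≤ R ^ 2}

section SobolevBall

variable {s R : ℝ} {h : ℕ → ℝ}

lemma summable_sq_of_mem_sobolevBall (hs : 0 ≤ s) (hh : h ∈ sobolevBall s R) :
    Summable fun k => h k ^ 2 :=
  hh.1.of_nonneg_of_le (fun _ => sq_nonneg _) fun _ =>
    le_mul_of_one_le_right (sq_nonneg _) (Real.one_le_rpow (by simp) hs)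

lemma rpow_mul_tsum_sq_nat_add_le_of_mem_sobolevBall (hs : 0 ≤ s) (hh : h ∈ sobolevBall s R)
    (K : ℕ) : ((K : ℝ) + 1) ^ s * ∑' k, h (k + K) ^ 2 ≤ R ^ 2 := by
  have hweight (k : ℕ) :
      ((K : ℝ) + 1) ^ s * h (k + K) ^ 2 ≤ h (k + K) ^ 2 * (((k + K : ℕ) : ℝ) + 1) ^ s := by
    rw [mul_comm]
    gcongr
    simp
  calc ((K : ℝ) + 1) ^ s * ∑' k, h (k + K) ^ 2
      = ∑' k, ((K : ℝ) + 1) ^ s * h (k + K) ^ 2 := tsum_mul_left.symm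
    _ ≤ ∑' k, h (k + K) ^ 2 * (((k + K : ℕ) : ℝ) + 1) ^ s :=
        (((summable_nat_add_iff K).2 (summable_sq_of_mem_sobolevBall hs hh)).mul_left _
          ).tsum_le_tsum hweight ((summable_nat_add_iff K).2 hh.1)
    _ ≤ ∑' k, h k ^ 2 * ((k : ℝ) + 1) ^ s :=
        tsum_comp_le_tsum_of_inj hh.1 (fun k => by positivity) (add_left_injective K)
    _ ≤ R ^ 2 := hh.2

lemma toLp_mem_ellipsoid_of_mem_sobolevBall (hR : 0 < R) (hh : h ∈ sobolevBall s R) (K : ℕ) :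
    WithLp.toLp 2 (fun i : Fin K => h i) ∈
      ellipsoid fun i : Fin K => R / ((i : ℝ) + 1) ^ (s / 2) := by
  have hterm (i : Fin K) :
      (h i / (R / ((i : ℝ) + 1) ^ (s / 2))) ^ 2 = h i ^ 2 * ((i : ℝ) + 1) ^ s / R ^ 2 := by
    rw [div_div_eq_mul_div, div_pow, mul_pow, ← Real.rpow_natCast (_ ^ (s / 2)),
      ← Real.rpow_mul (by positivity)]
    norm_num
  simp only [ellipsoid, Set.mem_ofPred_eq]
  simp_rw [hterm, ← sum_div]
  rw [div_le_one (by positivity),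
    Fin.sum_univ_eq_sum_range (fun k => h k ^ 2 * ((k : ℝ) + 1) ^ s)]
  exact (hh.1.sum_le_tsum _ fun k _ => by positivity).trans hh.2

lemma exists_finset_cover_sobolevBall_of_le (hs : 0 ≤ s) (hR : 0 < R) {ε : ℝ} (hε : 0 < ε)
    {K : ℕ} (hK : 2 * R ^ 2 ≤ ε ^ 2 * ((K : ℝ) + 1) ^ s) :
    ∃ S : Finset (ℕ → ℝ), (∀ x ∈ S, Summable fun k => x k ^ 2) ∧
      (S.card : ℝ) ≤ 2 ^ K * ∏ i ∈ range K, (1 + 2 * √2 * R / ε / ((i : ℝ) + 1) ^ (s / 2)) ∧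
      ∀ h ∈ sobolevBall s R, ∃ x ∈ S,
        Summable (fun k => (h k - x k) ^ 2) ∧ ∑' k, (h k - x k) ^ 2 ≤ ε ^ 2 := by
  classical
  set δ : ℝ≥0 := ⟨ε / √2, by positivity⟩
  obtain ⟨P, hPcard, hPcover⟩ := exists_finset_isCover_ellipsoid
    (r := fun i : Fin K => R / ((i : ℝ) + 1) ^ (s / 2)) (fun i => by positivity)
    (show 0 < δ from div_pos hε (by positivity))
  refine ⟨P.image zeroExtend, ?_, ?_, fun h hh => ?_⟩
  · simp only [mem_image]
    rintro _ ⟨p, -, rfl⟩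
    exact summable_sq_zeroExtend p
  · refine (Nat.cast_le.2 card_image_le).trans (hPcard.trans_eq ?_)
    rw [show (δ : ℝ) = ε / √2 from rfl,
      Fin.prod_univ_eq_prod_range (fun i => 2 * (1 + 2 * (R / ((i : ℝ) + 1) ^ (s / 2)) / (ε / √2))),
      prod_mul_distrib, prod_const, card_range]
    congr 1
    refine prod_congr rfl fun i _ => ?_
    field_simp
  · obtain ⟨p, hp, hyp⟩ := hPcover (toLp_mem_ellipsoid_of_mem_sobolevBall hR hh K)
    have hhead : dist (WithLp.toLp 2 fun i : Fin K => h i) p ^ 2 ≤ ε ^ 2 / 2 := by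
      replace hyp : edist _ p ≤ δ := hyp
      rw [edist_le_coe, ← NNReal.coe_le_coe, coe_nndist] at hyp
      calc dist (WithLp.toLp 2 fun i : Fin K => h i) p ^ 2 ≤ (ε / √2) ^ 2 := by gcongr; exact hyp
        _ = ε ^ 2 / 2 := by rw [div_pow, Real.sq_sqrt zero_le_two]
    have htail : ∑' k, h (k + K) ^ 2 ≤ ε ^ 2 / 2 := by
      have := rpow_mul_tsum_sq_nat_add_le_of_mem_sobolevBall hs hh K
      have hpos : 0 < ((K : ℝ) + 1) ^ s := by positivity
      rw [le_div_iff₀ two_pos]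
      nlinarith
    have hsum := hasSum_sq_sub_zeroExtend (summable_sq_of_mem_sobolevBall hs hh) p
    exact ⟨zeroExtend p, mem_image_of_mem _ hp, hsum.summable, hsum.tsum_eq ▸ by linarith⟩

theorem exists_finset_cover_sobolevBall (hs : 1 ≤ s) :
    ∃ C > 0, ∀ R > 0, ∀ ε > 0, ∃ S : Finset (ℕ → ℝ),
      (∀ x ∈ S, Summable fun k => x k ^ 2) ∧
      (S.card : ℝ) ≤ Real.exp (C * (R / ε) ^ (2 / s)) ∧
      ∀ h ∈ sobolevBall s R, ∃ x ∈ S,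
        Summable (fun k => (h k - x k) ^ 2) ∧ ∑' k, (h k - x k) ^ 2 ≤ ε ^ 2 := by
  have hs0 : 0 < s := by linarith
  refine ⟨2 + 8 * s, by positivity, fun R hR ε hε => ?_⟩
  set a := (R / ε) ^ s⁻¹
  have ha : 0 ≤ a := by positivity
  have ha_sq : a ^ 2 = (R / ε) ^ (2 / s) := by
    rw [← Real.rpow_natCast, ← Real.rpow_mul (by positivity)]; ring_nf
  set K := ⌊2 * a ^ 2⌋₊
  have hK : 2 * R ^ 2 ≤ ε ^ 2 * ((K : ℝ) + 1) ^ s := by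
    have h2s : (2 : ℝ) ≤ 2 ^ s := by
      simpa using Real.rpow_le_rpow_of_exponent_le one_le_two hs
    have ha_pow : (a ^ 2) ^ s = (R / ε) ^ 2 := by
      rw [ha_sq, ← Real.rpow_mul (by positivity), div_mul_cancel₀ _ hs0.ne', Real.rpow_two]
    calc 2 * R ^ 2 = ε ^ 2 * (2 * (R / ε) ^ 2) := by field_simp
      _ ≤ ε ^ 2 * (2 ^ s * (a ^ 2) ^ s) := by rw [ha_pow]; gcongr
      _ = ε ^ 2 * (2 * a ^ 2) ^ s := by rw [Real.mul_rpow zero_le_two (by positivity)]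
      _ ≤ ε ^ 2 * ((K : ℝ) + 1) ^ s := by gcongr; exact (Nat.lt_floor_add_one _).le
  obtain ⟨S, hS, hcard, hcover⟩ := exists_finset_cover_sobolevBall_of_le hs0.le hR hε hK
  refine ⟨S, hS, hcard.trans ?_, hcover⟩
  have ht : (2 * √2 * R / ε) ^ s⁻¹ ≤ 2 * √2 * a := by
    have h1 : 1 ≤ 2 * √2 := by nlinarith [Real.one_lt_sqrt_two]
    rw [mul_div_assoc, Real.mul_rpow (by positivity) (by positivity)]
    gcongr
    simpa using Real.rpow_le_rpow_of_exponent_le h1 (inv_le_one_of_one_le₀ hs)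
  have hKa : (K : ℝ) ≤ 2 * a ^ 2 := Nat.floor_le (by positivity)
  have hsqrtK : √K ≤ √2 * a := by
    calc √K ≤ √(2 * a ^ 2) := Real.sqrt_le_sqrt hKa
      _ = √2 * a := by rw [Real.sqrt_mul zero_le_two, Real.sqrt_sq ha]
  have h2K : (2 : ℝ) ^ K ≤ Real.exp K := by
    rw [← mul_one (K : ℝ), Real.exp_nat_mul]
    gcongr
    linarith [Real.add_one_le_exp 1]
  calc (2 : ℝ) ^ K * ∏ i ∈ range K, (1 + 2 * √2 * R / ε / ((i : ℝ) + 1) ^ (s / 2))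
      ≤ Real.exp K * Real.exp (2 * s * (2 * √2 * R / ε) ^ s⁻¹ * √K) := by
        gcongr
        exact prod_range_one_add_div_rpow_le_exp hs (by positivity) K
    _ ≤ Real.exp (2 * a ^ 2) * Real.exp (2 * s * (2 * √2 * a) * (√2 * a)) := by gcongr
    _ = Real.exp ((2 + 8 * s) * (R / ε) ^ (2 / s)) := by
        rw [← Real.exp_add, ← ha_sq]
        congr 1
        linear_combination (4 * s * a ^ 2) * Real.sq_sqrt (zero_le_two (α := ℝ))

end SobolevBall

/-- Entropy bound for the sieve `B = R·H₁^{α+1/2} + ε·L²₁`: for every `α > 0` there is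
`C > 0` such that for all `R, ε > 0` there is a finite set `S` of square-summable
sequences of cardinality at most `exp(C (R/ε)^{2/(1+2α)})` such that every element of `B`
is within ℓ²-distance `2ε` of some element of `S`. -/
theorem stmt_7 (α : ℝ) (hα : 0 < α) :
    ∃ C > 0, ∀ R > 0, ∀ ε > 0,
      ∃ S : Finset (ℕ → ℝ),
        (∀ s ∈ S, Summable fun k => (s k)^2) ∧
        (S.card : ℝ) ≤ Real.exp (C * (R/ε)^(2/(1+2*α))) ∧
        ∀ x : ℕ → ℝ,
          (∃ h g : ℕ → ℝ, (∀ k, x k = h k + g k) ∧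
            (Summable fun k => (h k)^2 * ((k:ℝ)+1)^(1+2*α)) ∧
            (∑' k : ℕ, (h k)^2 * ((k:ℝ)+1)^(1+2*α)) ≤ R^2 ∧
            (Summable fun k => (g k)^2) ∧ (∑' k : ℕ, (g k)^2) ≤ ε^2) →
          ∃ s ∈ S, (Summable fun k => (x k - s k)^2) ∧
            (∑' k : ℕ, (x k - s k)^2) ≤ (2*ε)^2 := by
  obtain ⟨C, hC, hcover⟩ := exists_finset_cover_sobolevBall (s := 1 + 2 * α) (by linarith)
  refine ⟨C, hC, fun R hR ε hε => ?_⟩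
  obtain ⟨S, hS, hcard, hS_cover⟩ := hcover R hR ε hε
  refine ⟨S, hS, hcard, ?_⟩
  rintro x ⟨h, g, hx, hh, hhR, hg, hgε⟩
  obtain ⟨y, hyS, hhy, hhyε⟩ := hS_cover h ⟨hh, hhR⟩
  have hxy : (fun k => (x k - y k) ^ 2) = fun k => (h k - y k + g k) ^ 2 := by
    ext k; rw [hx]; ring
  refine ⟨y, hyS, hxy ▸ summable_sq_add hhy hg, ?_⟩
  calc ∑' k, (x k - y k) ^ 2 = ∑' k, (h k - y k + g k) ^ 2 := by rw [hxy]
    _ ≤ 2 * (∑' k, (h k - y k) ^ 2 + ∑' k, g k ^ 2) := tsum_sq_add_le hhy hg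
    _ ≤ (2 * ε) ^ 2 := by nlinarith
end

section
/- Let β > 0 and let b0 = (b_k)_{k≥1} be a sequence with Σ_{k=1}^∞ b_k² k^{2β} < ∞. For T > e let α be a random variable with density λ_T(x) = C_T^{−1} exp(−T^{1/(1+2x)}) on [0, log T] (C_T the normalizing constant), independent of the iid standard normal sequence (Z_k)_{k≥1}, and set W = (k^{−1/2−α} Z_k)_{k≥1}. Then there exist constants c, C > 0 and T0 > 0 such that for all T ≥ T0, with ε_T = c T^{−β/(1+2β)}, P( Σ_{k=1}^∞ (k^{−1/2−α} Z_k − b_k)² ≤ ε_T² ) ≥ exp( −C T ε_T² ). -/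
open MeasureTheory ProbabilityTheory Real Set

open scoped ENNReal

/-!
Given `α = a`, the coordinates `(k+1)^(-1/2-a) Z_k - b_k` are independent, and the Laplace
transform of `(σ Z - c)²` at `-t` is explicit. Hence
`P(‖W - b‖² ≤ ε²) ≥ E exp(-T ‖W - b‖²) - exp(-T ε²)`, and the first term is
`exp(-Σ_k (½ log(1 + λ_k) + T b_k² / (1 + λ_k)))` with `λ_k = 2T (k+1)^(-1-2a)`. Splitting the sum
at `k ≈ (2T)^(1/(1+2a))` bounds it by a multiple of `(2T)^((1+2a-2β)/(1+2a))`, which is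
`O(T^(1/(1+2β)))` as long as `a ∈ [β, β + 1/log T]`. The hyperprior gives this window mass at
least `(log T)⁻² exp(-T^(1/(1+2β)))`, and the independence of `α` and `Z` lets the two bounds
multiply.
-/

lemma sum_range_log_div_le {M : ℝ} (hM : 0 < M) (m : ℕ) :
    ∑ k ∈ Finset.range m, log (M / (k + 1)) ≤ M := by
  have hprod : ∏ k ∈ Finset.range m, (M / (k + 1)) = M ^ m / m.factorial := by
    rw [Finset.prod_div_distrib, Finset.prod_const, Finset.card_range,
      ← Finset.prod_range_add_one_eq_factorial]
    push_cast; rfl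
  calc ∑ k ∈ Finset.range m, log (M / (k + 1))
      = log (M ^ m / m.factorial) := by
        rw [← hprod, log_prod]; intro k _; positivity
    _ ≤ log (exp M) := log_le_log (by positivity) (pow_div_factorial_le_exp M hM.le m)
    _ = M := log_exp M

lemma sum_range_log_one_add_div_rpow_le_of_le {M q : ℝ} (hM : 0 < M) (hq : 0 ≤ q) {m : ℕ}
    (hmM : (m : ℝ) ≤ M) :
    ∑ k ∈ Finset.range m, log (1 + (M / (k + 1)) ^ q) ≤ (log 2 + q) * M := by
  have hterm : ∀ k ∈ Finset.range m,
      log (1 + (M / (k + 1)) ^ q) ≤ log 2 + q * log (M / (k + 1)) := by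
    intro k hk
    have hk : (k : ℝ) + 1 ≤ M := by
      have := Finset.mem_range.1 hk
      exact le_trans (by exact_mod_cast this) hmM
    have h1 : 1 ≤ M / (k + 1) := (one_le_div (by positivity)).2 hk
    calc log (1 + (M / (k + 1)) ^ q) ≤ log (2 * (M / (k + 1)) ^ q) :=
          log_le_log (by positivity) (by linarith [one_le_rpow h1 hq])
      _ = log 2 + q * log (M / (k + 1)) := by
          rw [log_mul (by norm_num) (by positivity), log_rpow (by positivity)]
  calc ∑ k ∈ Finset.range m, log (1 + (M / (k + 1)) ^ q)
      ≤ ∑ k ∈ Finset.range m, (log 2 + q * log (M / (k + 1))) := Finset.sum_le_sum hterm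
    _ = m * log 2 + q * ∑ k ∈ Finset.range m, log (M / (k + 1)) := by
        rw [Finset.sum_add_distrib, Finset.sum_const, Finset.card_range, nsmul_eq_mul,
          Finset.mul_sum]
    _ ≤ M * log 2 + q * M := by
        gcongr ?_ + q * ?_
        · exact mul_le_mul_of_nonneg_right hmM (log_nonneg one_le_two)
        exact sum_range_log_div_le hM m
    _ = (log 2 + q) * M := by ring

lemma sum_Ico_rpow_neg_le {q : ℝ} (hq : 1 < q) {m n : ℕ} (hm : 0 < m) :
    ∑ k ∈ Finset.Ico m n, ((k : ℝ) + 1) ^ (-q) ≤ (m : ℝ) ^ (1 - q) / (q - 1) := by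
  rcases le_or_gt m n with hmn | hnm
  swap
  · rw [Finset.Ico_eq_empty (by omega), Finset.sum_empty]; positivity
  have hm' : (0 : ℝ) < m := by exact_mod_cast hm
  have hanti : AntitoneOn (fun x : ℝ => x ^ (-q)) (Icc (m : ℝ) n) := fun x hx y _ hxy =>
    rpow_le_rpow_of_nonpos (hm'.trans_le hx.1) hxy (by linarith)
  have h0 : (0 : ℝ) ∉ uIcc (m : ℝ) n := by
    rw [uIcc_of_le (by exact_mod_cast hmn)]; exact fun h => hm'.not_ge h.1
  calc ∑ k ∈ Finset.Ico m n, ((k : ℝ) + 1) ^ (-q)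
      ≤ ∫ x in (m : ℝ)..n, x ^ (-q) := by
        simpa using hanti.sum_le_integral_Ico hmn
    _ = ((m : ℝ) ^ (1 - q) - (n : ℝ) ^ (1 - q)) / (q - 1) := by
        rw [integral_rpow (Or.inr ⟨by linarith, h0⟩)]
        rw [show -q + 1 = 1 - q by ring, ← neg_sub q 1, div_neg, ← neg_div, neg_sub]
    _ ≤ (m : ℝ) ^ (1 - q) / (q - 1) := by
        gcongr ?_ / _
        exact sub_le_self _ (by positivity)

lemma sum_Ico_log_one_add_div_rpow_le {M q : ℝ} (hM : 0 < M) (hq : 1 < q) {m : ℕ} (hm : 0 < m)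
    (n : ℕ) :
    ∑ k ∈ Finset.Ico m n, log (1 + (M / (k + 1)) ^ q) ≤ M ^ q * (m : ℝ) ^ (1 - q) / (q - 1) := by
  calc ∑ k ∈ Finset.Ico m n, log (1 + (M / (k + 1)) ^ q)
      ≤ ∑ k ∈ Finset.Ico m n, M ^ q * ((k : ℝ) + 1) ^ (-q) := by
        gcongr with k
        calc log (1 + (M / (k + 1)) ^ q) ≤ (M / (k + 1)) ^ q := by
              linarith [log_le_sub_one_of_pos (by positivity : 0 < 1 + (M / (k + 1)) ^ q)]
          _ = M ^ q * ((k : ℝ) + 1) ^ (-q) := by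
              rw [div_rpow hM.le (by positivity), rpow_neg (by positivity), div_eq_mul_inv]
    _ ≤ M ^ q * ((m : ℝ) ^ (1 - q) / (q - 1)) := by
        rw [← Finset.mul_sum]; gcongr; exact sum_Ico_rpow_neg_le hq hm
    _ = M ^ q * (m : ℝ) ^ (1 - q) / (q - 1) := by ring

lemma sum_range_log_one_add_div_rpow_le {M q : ℝ} (hM : 1 ≤ M) (hq : 1 < q) (n : ℕ) :
    ∑ k ∈ Finset.range n, log (1 + (M / (k + 1)) ^ q)
      ≤ (log 2 + q + 2 ^ (q - 1) / (q - 1)) * M := by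
  have hM0 : 0 < M := by linarith
  set m := ⌊M⌋₊
  have hm : 0 < m := Nat.floor_pos.2 hM
  have hmM : (m : ℝ) ≤ M := Nat.floor_le hM0.le
  have hMm : M / 2 ≤ m := by
    have := Nat.sub_one_lt_floor M
    have : (1 : ℝ) ≤ m := by exact_mod_cast hm
    rcases le_total M 2 with h | h <;> linarith
  have hnn : ∀ k : ℕ, 0 ≤ log (1 + (M / (k + 1)) ^ q) := fun k =>
    log_nonneg (by linarith [rpow_nonneg (by positivity : 0 ≤ M / (k + 1)) q])
  have htail : M ^ q * (m : ℝ) ^ (1 - q) ≤ 2 ^ (q - 1) * M := by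
    calc M ^ q * (m : ℝ) ^ (1 - q) ≤ M ^ q * (M / 2) ^ (1 - q) :=
          mul_le_mul_of_nonneg_left (rpow_le_rpow_of_nonpos (by positivity) hMm (by linarith))
            (by positivity)
      _ = 2 ^ (q - 1) * M := by
          rw [div_rpow hM0.le zero_le_two, mul_div_assoc', ← rpow_add hM0, add_sub_cancel,
            rpow_one, div_eq_mul_inv, ← rpow_neg zero_le_two, neg_sub, mul_comm]
  calc ∑ k ∈ Finset.range n, log (1 + (M / (k + 1)) ^ q)
      ≤ ∑ k ∈ Finset.range (max n m), log (1 + (M / (k + 1)) ^ q) :=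
        Finset.sum_le_sum_of_subset_of_nonneg (Finset.range_subset_range.2 (le_max_left n m))
          fun k _ _ => hnn k
    _ = ∑ k ∈ Finset.range m, log (1 + (M / (k + 1)) ^ q)
          + ∑ k ∈ Finset.Ico m (max n m), log (1 + (M / (k + 1)) ^ q) :=
        (Finset.sum_range_add_sum_Ico _ (le_max_right n m)).symm
    _ ≤ (log 2 + q) * M + M ^ q * (m : ℝ) ^ (1 - q) / (q - 1) :=
        add_le_add (sum_range_log_one_add_div_rpow_le_of_le hM0 (by linarith) hmM)
          (sum_Ico_log_one_add_div_rpow_le hM0 hq hm _)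
    _ ≤ (log 2 + q) * M + 2 ^ (q - 1) * M / (q - 1) := by
        gcongr
    _ = (log 2 + q + 2 ^ (q - 1) / (q - 1)) * M := by ring

noncomputable def gaussianSqCost (t v c : ℝ) : ℝ :=
  log (1 + 2 * t * v) / 2 + t * c ^ 2 / (1 + 2 * t * v)

lemma rpow_div_one_add_div_rpow_le {x M p q : ℝ} (hx : 0 < x) (hM : 0 < M) (hp : 0 ≤ p)
    (hpq : p ≤ q) : M ^ q / (1 + (M / x) ^ q) ≤ x ^ p * M ^ (q - p) := by
  have hsplit : ∀ y : ℝ, 0 < y → y ^ q = y ^ p * y ^ (q - p) := fun y hy => by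
    rw [← rpow_add hy, add_sub_cancel]
  rcases le_total x M with hxM | hMx
  · calc M ^ q / (1 + (M / x) ^ q) ≤ M ^ q / (M / x) ^ q :=
          div_le_div_of_nonneg_left (by positivity) (by positivity) (by linarith)
      _ = x ^ p * x ^ (q - p) := by
          rw [div_rpow hM.le hx.le, div_div_cancel₀ (by positivity), hsplit x hx]
      _ ≤ x ^ p * M ^ (q - p) := by gcongr
  · calc M ^ q / (1 + (M / x) ^ q) ≤ M ^ q :=
          div_le_self (by positivity) (by linarith [rpow_nonneg (div_nonneg hM.le hx.le) q])
      _ = M ^ p * M ^ (q - p) := hsplit M hM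
      _ ≤ x ^ p * M ^ (q - p) := by gcongr

lemma sum_gaussianSqCost_le {M q β B : ℝ} (hM : 1 ≤ M) (hβ : 0 < β) (hq : 1 + 2 * β ≤ q)
    {b : ℕ → ℝ} (hB : ∀ n, ∑ k ∈ Finset.range n, b k ^ 2 * ((k : ℝ) + 1) ^ (2 * β) ≤ B)
    (n : ℕ) :
    ∑ k ∈ Finset.range n, gaussianSqCost (M ^ q / 2) (((k : ℝ) + 1) ^ (-q)) (b k)
      ≤ (log 2 + q + 2 ^ (q - 1) / (q - 1) + B) / 2 * M ^ (q - 2 * β) := by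
  have hM0 : 0 < M := by linarith
  have hq1 : 1 < q := by linarith
  have hvar : ∀ k : ℕ, 2 * (M ^ q / 2) * ((k : ℝ) + 1) ^ (-q) = (M / (k + 1)) ^ q := fun k => by
    rw [div_rpow hM0.le (by positivity), rpow_neg (by positivity)]; ring
  have hterm : ∀ k : ℕ, gaussianSqCost (M ^ q / 2) (((k : ℝ) + 1) ^ (-q)) (b k)
      ≤ log (1 + (M / (k + 1)) ^ q) / 2 + b k ^ 2 * ((k : ℝ) + 1) ^ (2 * β) * M ^ (q - 2 * β) / 2 :=
    fun k => by
    have := rpow_div_one_add_div_rpow_le (x := (k : ℝ) + 1) (by positivity) hM0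
      (by positivity : 0 ≤ 2 * β) (by linarith : 2 * β ≤ q)
    rw [gaussianSqCost, hvar, add_le_add_iff_left]
    calc M ^ q / 2 * b k ^ 2 / (1 + (M / (k + 1)) ^ q)
        = b k ^ 2 * (M ^ q / (1 + (M / (k + 1)) ^ q)) / 2 := by ring
      _ ≤ b k ^ 2 * (((k : ℝ) + 1) ^ (2 * β) * M ^ (q - 2 * β)) / 2 := by gcongr
      _ = b k ^ 2 * ((k : ℝ) + 1) ^ (2 * β) * M ^ (q - 2 * β) / 2 := by ring
  have hcoef : 0 ≤ log 2 + q + 2 ^ (q - 1) / (q - 1) := by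
    have := log_nonneg one_le_two; have : 0 < q - 1 := by linarith
    positivity
  have hMle : M ≤ M ^ (q - 2 * β) := self_le_rpow_of_one_le hM (by linarith)
  calc ∑ k ∈ Finset.range n, gaussianSqCost (M ^ q / 2) (((k : ℝ) + 1) ^ (-q)) (b k)
      ≤ (∑ k ∈ Finset.range n, log (1 + (M / (k + 1)) ^ q)) / 2
          + (∑ k ∈ Finset.range n, b k ^ 2 * ((k : ℝ) + 1) ^ (2 * β)) * M ^ (q - 2 * β) / 2 := by
        rw [Finset.sum_div, Finset.sum_mul, Finset.sum_div, ← Finset.sum_add_distrib]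
        exact Finset.sum_le_sum fun k _ => hterm k
    _ ≤ (log 2 + q + 2 ^ (q - 1) / (q - 1)) * M / 2 + B * M ^ (q - 2 * β) / 2 := by
        gcongr
        · exact sum_range_log_one_add_div_rpow_le hM hq1 n
        · exact hB n
    _ ≤ (log 2 + q + 2 ^ (q - 1) / (q - 1) + B) / 2 * M ^ (q - 2 * β) := by
        nlinarith [mul_le_mul_of_nonneg_left hMle hcoef]

lemma two_mul_rpow_le_of_mem_Icc {T a β : ℝ} (hβ : 0 < β) (hT : exp 1 ≤ T)
    (ha : a ∈ Icc β (β + 1 / log T)) :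
    (2 * T) ^ ((1 + 2 * a - 2 * β) / (1 + 2 * a)) ≤ 2 * exp 2 * T ^ (1 / (1 + 2 * β)) := by
  have hT1 : 1 ≤ log T := by rw [← log_exp 1]; exact log_le_log (exp_pos 1) hT
  have hT2 : 2 ≤ T := le_trans (by linarith [add_one_le_exp 1]) hT
  have hγ : 1 / (1 + 2 * β) ≤ 1 := by rw [div_le_one (by positivity)]; linarith
  have hexp : (1 + 2 * a - 2 * β) / (1 + 2 * a) ≤ 1 / (1 + 2 * β) + 1 / log T := by
    have : 0 < 1 + 2 * a := by linarith [ha.1]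
    have hsplit : (1 + 2 * a - 2 * β) / (1 + 2 * a)
        = 1 / (1 + 2 * β) + 4 * β * (a - β) / ((1 + 2 * a) * (1 + 2 * β)) := by
      field_simp; ring
    have hsmall : 4 * β * (a - β) / ((1 + 2 * a) * (1 + 2 * β)) ≤ a - β := by
      rw [div_le_iff₀ (by nlinarith [ha.1])]
      nlinarith [ha.1, sq_nonneg (2 * β - 1), mul_nonneg (sub_nonneg.2 ha.1) hβ.le]
    linarith [ha.2]
  have h2T : (2 * T) ^ (1 / log T) ≤ exp 2 := by
    rw [rpow_def_of_pos (by positivity), exp_le_exp, ← div_eq_mul_one_div,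
      div_le_iff₀ (by linarith), ← log_rpow (by linarith)]
    exact log_le_log (by positivity) (by norm_cast; nlinarith)
  calc (2 * T) ^ ((1 + 2 * a - 2 * β) / (1 + 2 * a))
      ≤ (2 * T) ^ (1 / (1 + 2 * β) + 1 / log T) :=
        rpow_le_rpow_of_exponent_le (by linarith) hexp
    _ = 2 ^ (1 / (1 + 2 * β)) * T ^ (1 / (1 + 2 * β)) * (2 * T) ^ (1 / log T) := by
        rw [rpow_add (by positivity), mul_rpow zero_le_two (by positivity)]
    _ ≤ 2 * T ^ (1 / (1 + 2 * β)) * exp 2 := by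
        gcongr
        calc (2 : ℝ) ^ (1 / (1 + 2 * β)) ≤ 2 ^ (1 : ℝ) :=
              rpow_le_rpow_of_exponent_le one_le_two hγ
          _ = 2 := rpow_one 2
    _ = 2 * exp 2 * T ^ (1 / (1 + 2 * β)) := by ring

lemma exists_sum_gaussianSqCost_le {β : ℝ} (hβ : 0 < β) {b : ℕ → ℝ}
    (hb : Summable fun k => b k ^ 2 * ((k : ℝ) + 1) ^ (2 * β)) :
    ∃ K > 0, ∀ T ≥ exp 1, ∀ a ∈ Icc β (β + 1 / log T), ∀ n,
      ∑ k ∈ Finset.range n, gaussianSqCost T ((((k : ℝ) + 1) ^ (-(1 / 2) - a)) ^ 2) (b k)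
        ≤ K * T ^ (1 / (1 + 2 * β)) := by
  set B := ∑' k, b k ^ 2 * ((k : ℝ) + 1) ^ (2 * β)
  have hnn : ∀ k : ℕ, 0 ≤ b k ^ 2 * ((k : ℝ) + 1) ^ (2 * β) := fun k => by positivity
  have hB : ∀ n, ∑ k ∈ Finset.range n, b k ^ 2 * ((k : ℝ) + 1) ^ (2 * β) ≤ B :=
    fun n => hb.sum_le_tsum _ fun k _ => hnn k
  have hB0 : 0 ≤ B := tsum_nonneg hnn
  refine ⟨exp 2 * (log 2 + 3 + 2 * β + 2 ^ (2 * β + 2) / (2 * β) + B),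
    by have := log_nonneg one_le_two; positivity, fun T hT a ha n => ?_⟩
  have hT1 : 1 ≤ log T := by rw [← log_exp 1]; exact log_le_log (exp_pos 1) hT
  have ha1 : a ≤ β + 1 := ha.2.trans (by gcongr; exact div_le_one_of_le₀ hT1 (by linarith))
  set q := 1 + 2 * a with hq
  have hq0 : 0 < q := by linarith [ha.1]
  set M := (2 * T) ^ (1 / q)
  have hT0 : 0 < 2 * T := by linarith [exp_pos 1]
  have hM : 1 ≤ M := one_le_rpow (by linarith [add_one_le_exp 1]) (by positivity)
  have hTM : M ^ q / 2 = T := by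
    rw [← rpow_mul hT0.le, one_div_mul_cancel (by positivity), rpow_one]; ring
  have hvar : ∀ k : ℕ, (((k : ℝ) + 1) ^ (-(1 / 2) - a)) ^ 2 = ((k : ℝ) + 1) ^ (-q) := fun k => by
    rw [← rpow_two, ← rpow_mul (by positivity), hq]; ring_nf
  have hcoef :
      log 2 + q + 2 ^ (q - 1) / (q - 1) ≤ log 2 + 3 + 2 * β + 2 ^ (2 * β + 2) / (2 * β) := by
    have h2 : (2 : ℝ) ^ (q - 1) ≤ 2 ^ (2 * β + 2) :=
      rpow_le_rpow_of_exponent_le one_le_two (by linarith)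
    have h3 : 2 ^ (q - 1) / (q - 1) ≤ 2 ^ (2 * β + 2) / (2 * β) :=
      div_le_div₀ (by positivity) h2 (by positivity) (by linarith [ha.1])
    linarith
  have hsum := sum_gaussianSqCost_le hM hβ (by linarith [ha.1] : 1 + 2 * β ≤ q) hB n
  rw [hTM, ← rpow_mul hT0.le, one_div_mul_eq_div] at hsum
  simp only [hvar]
  calc _ ≤ _ := hsum
    _ ≤ (log 2 + 3 + 2 * β + 2 ^ (2 * β + 2) / (2 * β) + B) / 2
          * (2 * exp 2 * T ^ (1 / (1 + 2 * β))) := by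
        have := log_nonneg one_le_two
        gcongr ?_ * ?_
        · linarith
        · exact two_mul_rpow_le_of_mem_Icc hβ hT ha
    _ = _ := by ring

section Probability

variable {Ω : Type*} [MeasurableSpace Ω] {P : Measure Ω}

lemma integral_exp_neg_mul_sq_gaussianReal {t : ℝ} (ht : 0 ≤ t) (σ c : ℝ) :
    ∫ x, exp (-(t * (σ * x - c) ^ 2)) ∂gaussianReal 0 1 = exp (-gaussianSqCost t (σ ^ 2) c) := by
  set p := 1 / 2 + t * σ ^ 2
  have hp : 0 < p := by positivity
  have hsquare : ∀ x : ℝ, gaussianPDFReal 0 1 x • exp (-(t * (σ * x - c) ^ 2))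
      = (√(2 * π))⁻¹ * exp (-(t * c ^ 2 / (2 * p))) * exp (-(p * (x - t * σ * c / p) ^ 2)) := by
    intro x
    simp only [gaussianPDFReal_def, smul_eq_mul, mul_assoc, ← exp_add, NNReal.coe_one, mul_one,
      sub_zero]
    congr 2
    field_simp
    ring
  rw [integral_gaussianReal_eq_integral_smul one_ne_zero, integral_congr_ae (ae_of_all _ hsquare),
    integral_const_mul, integral_sub_right_eq_self (fun x => exp (-(p * x ^ 2))),
    show (fun x : ℝ => exp (-(p * x ^ 2))) = fun x => exp (-p * x ^ 2) by simp only [neg_mul],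
    integral_gaussian]
  have h2p : 1 + 2 * t * σ ^ 2 = 2 * p := by ring
  have hsqrt : exp (-(log (2 * p) / 2)) = (√(2 * π))⁻¹ * √(π / p) := by
    rw [exp_neg, div_eq_mul_one_div (log _), ← rpow_def_of_pos (by positivity), ← sqrt_eq_rpow,
      sqrt_div' _ hp.le, sqrt_mul' _ pi_pos.le, sqrt_mul' _ hp.le]
    have : 0 < √π := sqrt_pos.2 pi_pos
    field_simp
  rw [gaussianSqCost, h2p, neg_add, exp_add, hsqrt]
  ring

lemma mgf_neg_sq_sub_eq {X : Ω → ℝ} (hX : Measurable X) (hlaw : P.map X = gaussianReal 0 1)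
    {t : ℝ} (ht : 0 ≤ t) (σ c : ℝ) :
    mgf (fun ω => (σ * X ω - c) ^ 2) P (-t) = exp (-gaussianSqCost t (σ ^ 2) c) := by
  rw [← integral_exp_neg_mul_sq_gaussianReal ht, ← hlaw, integral_map hX.aemeasurable
    (by fun_prop)]
  simp only [mgf, neg_mul]

lemma mgf_neg_sub_exp_le_measureReal [IsProbabilityMeasure P] {X : Ω → ℝ} (hX : Measurable X)
    (hXnn : ∀ ω, 0 ≤ X ω) {t : ℝ} (ht : 0 ≤ t) (r : ℝ) :
    mgf X P (-t) - exp (-(t * r)) ≤ P.real {ω | X ω ≤ r} := by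
  set E := {ω | X ω ≤ r}
  have hE : MeasurableSet E := measurableSet_le hX measurable_const
  have hpoint : ∀ ω, exp (-t * X ω) ≤ E.indicator 1 ω + exp (-(t * r)) := by
    intro ω
    by_cases hω : ω ∈ E
    · rw [indicator_of_mem hω, Pi.one_apply]
      have : exp (-t * X ω) ≤ 1 := exp_le_one_iff.2 (by nlinarith [hXnn ω])
      linarith [exp_pos (-(t * r))]
    · rw [indicator_of_notMem hω, zero_add]
      exact exp_le_exp.2 (by nlinarith [not_le.1 (show ¬X ω ≤ r from hω)])
  have hint : Integrable (fun ω => exp (-t * X ω)) P := by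
    refine (integrable_const 1).mono' (by fun_prop) (ae_of_all _ fun ω => ?_)
    rw [norm_of_nonneg (exp_pos _).le]
    exact exp_le_one_iff.2 (by nlinarith [hXnn ω])
  calc mgf X P (-t) - exp (-(t * r))
      ≤ ∫ ω, (E.indicator 1 ω + exp (-(t * r))) ∂P - exp (-(t * r)) := by
        gcongr
        exact integral_mono hint ((integrable_const 1).indicator hE |>.add (integrable_const _))
          hpoint
    _ = P.real E := by
        rw [integral_add ((integrable_const 1).indicator hE) (integrable_const _),
          integral_indicator_one hE, integral_const, probReal_univ, one_smul, add_sub_cancel_right]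

lemma setOf_summable_and_tsum_le_eq_iInter {α : Type*} {f : ℕ → α → ℝ} (hf : ∀ k x, 0 ≤ f k x)
    (r : ℝ) :
    {x | Summable (fun k => f k x) ∧ ∑' k, f k x ≤ r}
      = ⋂ n, {x | ∑ k ∈ Finset.range n, f k x ≤ r} := by
  ext x
  simp only [mem_ofPred_eq, mem_iInter]
  exact ⟨fun ⟨hs, h⟩ n => (hs.sum_le_tsum _ fun k _ => hf k x).trans h,
    fun h => ⟨summable_of_sum_range_le (hf · x) h, Real.tsum_le_of_sum_range_le (hf · x) h⟩⟩

lemma measurableSet_setOf_summable_and_tsum_le {α : Type*} [MeasurableSpace α]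
    {f : ℕ → α → ℝ} (hf : ∀ k x, 0 ≤ f k x) (hfm : ∀ k, Measurable (f k)) (r : ℝ) :
    MeasurableSet {x | Summable (fun k => f k x) ∧ ∑' k, f k x ≤ r} := by
  rw [setOf_summable_and_tsum_le_eq_iInter hf]
  exact MeasurableSet.iInter fun n => measurableSet_le (by fun_prop) measurable_const

lemma exp_neg_sub_exp_le_measure_summable_tsum_le [IsProbabilityMeasure P] {X : ℕ → Ω → ℝ}
    (hX : ∀ k, Measurable (X k)) (hXnn : ∀ k ω, 0 ≤ X k ω) (hind : iIndepFun X P) {t F : ℝ}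
    (ht : 0 ≤ t) (hF : ∀ n, exp (-F) ≤ ∏ k ∈ Finset.range n, mgf (X k) P (-t)) (r : ℝ) :
    ENNReal.ofReal (exp (-F) - exp (-(t * r)))
      ≤ P {ω | Summable (fun k => X k ω) ∧ ∑' k, X k ω ≤ r} := by
  have hanti : Antitone fun n => {ω | ∑ k ∈ Finset.range n, X k ω ≤ r} :=
    fun m n hmn ω hω => le_trans (Finset.sum_le_sum_of_subset_of_nonneg
      (Finset.range_subset_range.2 hmn) fun k _ _ => hXnn k ω) hω
  rw [setOf_summable_and_tsum_le_eq_iInter hXnn, hanti.measure_iInter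
    (fun n => (measurableSet_le (by fun_prop) measurable_const).nullMeasurableSet)
    ⟨0, measure_ne_top _ _⟩]
  refine le_iInf fun n => ?_
  rw [← ofReal_measureReal]
  refine ENNReal.ofReal_le_ofReal ?_
  have := mgf_neg_sub_exp_le_measureReal (P := P) (X := ∑ k ∈ Finset.range n, X k)
    (by fun_prop)
    (fun ω => by simpa only [Finset.sum_apply] using Finset.sum_nonneg fun k _ => hXnn k ω) ht r
  simp only [hind.mgf_sum hX, Finset.sum_apply] at this
  linarith [hF n]

lemma exp_neg_sub_exp_le_measure_gaussian_small_ball [IsProbabilityMeasure P] {Z : ℕ → Ω → ℝ}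
    (hmeas : ∀ k, Measurable (Z k)) (hlaw : ∀ k, P.map (Z k) = gaussianReal 0 1)
    (hindep : iIndepFun Z P) (σ b : ℕ → ℝ) {t F : ℝ} (ht : 0 ≤ t)
    (hF : ∀ n, ∑ k ∈ Finset.range n, gaussianSqCost t (σ k ^ 2) (b k) ≤ F) (r : ℝ) :
    ENNReal.ofReal (exp (-F) - exp (-(t * r)))
      ≤ P {ω | Summable (fun k => (σ k * Z k ω - b k) ^ 2) ∧
          ∑' k, (σ k * Z k ω - b k) ^ 2 ≤ r} := by
  refine exp_neg_sub_exp_le_measure_summable_tsum_le (fun k => by fun_prop)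
    (fun k ω => sq_nonneg _) (hindep.comp (fun k x => (σ k * x - b k) ^ 2) fun k => by fun_prop)
    ht (fun n => ?_) r
  rw [Finset.prod_congr rfl fun k _ => mgf_neg_sq_sub_eq (hmeas k) (hlaw k) ht (σ k) (b k),
    ← exp_sum, Finset.sum_neg_distrib]
  exact exp_le_exp.2 (neg_le_neg (hF n))

lemma ProbabilityTheory.IndepFun.mul_map_le_measure [IsProbabilityMeasure P] {α β : Type*}
    [MeasurableSpace α] [MeasurableSpace β] {X : Ω → α} {Y : Ω → β} (h : IndepFun X Y P)
    (hX : Measurable X) (hY : Measurable Y) {D : Set (α × β)} (hD : MeasurableSet D) {I : Set α}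
    (hI : MeasurableSet I) {m : ℝ≥0∞} (hm : ∀ a ∈ I, m ≤ P {ω | (a, Y ω) ∈ D}) :
    m * P.map X I ≤ P {ω | (X ω, Y ω) ∈ D} := by
  have : IsProbabilityMeasure (P.map Y) := Measure.isProbabilityMeasure_map hY.aemeasurable
  have hprod : P.map (fun ω => (X ω, Y ω)) = (P.map X).prod (P.map Y) :=
    (indepFun_iff_map_prod_eq_prod_map_map hX.aemeasurable hY.aemeasurable).1 h
  calc m * P.map X I = ∫⁻ _ in I, m ∂P.map X := (setLIntegral_const _ _).symm
    _ ≤ ∫⁻ a in I, P.map Y (Prod.mk a ⁻¹' D) ∂P.map X := setLIntegral_mono' hI fun a ha => by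
        rw [Measure.map_apply hY (measurable_prodMk_left hD)]; exact hm a ha
    _ ≤ ∫⁻ a, P.map Y (Prod.mk a ⁻¹' D) ∂P.map X := setLIntegral_le_lintegral _ _
    _ = P {ω | (X ω, Y ω) ∈ D} := by
        rw [← Measure.prod_apply hD, ← hprod, Measure.map_apply (hX.prodMk hY) hD]; rfl

end Probability

lemma exp_neg_mul_rpow_le_inv_log {T β : ℝ} (hT : 1 < T) (hβ : 0 ≤ β) :
    exp (-((1 + 2 * β) * T ^ (1 / (1 + 2 * β)))) ≤ (log T)⁻¹ := by
  rw [exp_neg]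
  refine inv_anti₀ (log_pos hT)
    ((log_le_rpow_div (ε := 1 / (1 + 2 * β)) (by linarith) (by positivity)).trans ?_)
  rw [div_div_eq_mul_div, div_one, mul_comm]
  linarith [add_one_le_exp ((1 + 2 * β) * T ^ (1 / (1 + 2 * β)))]

noncomputable def hyperprior (T : ℝ) : Measure ℝ :=
  (volume.restrict (Icc 0 (log T))).withDensity fun x =>
    ENNReal.ofReal ((∫ y in (0:ℝ)..log T, exp (-T ^ (1 / (1 + 2 * y))))⁻¹
      * exp (-T ^ (1 / (1 + 2 * x))))

lemma ofReal_div_log_mul_exp_le_hyperprior_Icc {T β δ : ℝ} (hT : 1 < T) (hβ : 0 ≤ β)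
    (hβδ : β + δ ≤ log T) :
    ENNReal.ofReal (δ / log T * exp (-T ^ (1 / (1 + 2 * β))))
      ≤ hyperprior T (Icc β (β + δ)) := by
  have hlogT : 0 < log T := log_pos hT
  set f : ℝ → ℝ := fun y => exp (-(T ^ (1 / (1 + 2 * y))))
  have hf_int : IntervalIntegrable f volume 0 (log T) := by
    refine ContinuousOn.intervalIntegrable fun y hy => ContinuousAt.continuousWithinAt ?_
    rw [uIcc_of_le hlogT.le] at hy
    have : 1 + 2 * y ≠ 0 := by linarith [hy.1]
    have hexp : ContinuousAt (fun y : ℝ => 1 / (1 + 2 * y)) y := by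
      fun_prop (disch := exact this)
    exact (continuousAt_const.rpow hexp (Or.inl (by positivity))).neg.rexp
  have hC_pos : 0 < ∫ y in (0:ℝ)..log T, f y :=
    intervalIntegral.intervalIntegral_pos_of_pos_on hf_int (fun y _ => exp_pos _) hlogT
  have hC_le : ∫ y in (0:ℝ)..log T, f y ≤ log T := by
    simpa using intervalIntegral.integral_mono_on hlogT.le hf_int intervalIntegrable_const
      fun y _ => exp_le_one_iff.2 (neg_nonpos.2 (rpow_nonneg (by linarith) _))
  have hdens : ∀ x ∈ Icc β (β + δ), ENNReal.ofReal ((log T)⁻¹ * exp (-T ^ (1 / (1 + 2 * β))))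
      ≤ ENNReal.ofReal ((∫ y in (0:ℝ)..log T, f y)⁻¹ * f x) := fun x hx =>
    ENNReal.ofReal_le_ofReal <| mul_le_mul (inv_anti₀ hC_pos hC_le)
      (exp_le_exp.2 <| neg_le_neg <| rpow_le_rpow_of_exponent_le hT.le (by gcongr; exact hx.1))
      (exp_pos _).le (by positivity)
  rw [hyperprior, withDensity_apply _ measurableSet_Icc,
    Measure.restrict_restrict measurableSet_Icc, inter_eq_left.2 (Icc_subset_Icc hβ hβδ)]
  calc ENNReal.ofReal (δ / log T * exp (-T ^ (1 / (1 + 2 * β))))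
      = ∫⁻ _ in Icc β (β + δ), ENNReal.ofReal ((log T)⁻¹ * exp (-T ^ (1 / (1 + 2 * β)))) := by
        rw [setLIntegral_const, Real.volume_Icc, add_sub_cancel_left, ← ENNReal.ofReal_mul
          (by positivity)]
        ring_nf
    _ ≤ _ := setLIntegral_mono' measurableSet_Icc hdens

lemma ofReal_exp_neg_le_hyperprior_Icc {T β : ℝ} (hβ : 0 < β) (hT : exp (β + 1) ≤ T) :
    ENNReal.ofReal (exp (-((3 + 4 * β) * T ^ (1 / (1 + 2 * β)))))
      ≤ hyperprior T (Icc β (β + 1 / log T)) := by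
  have hT1 : 1 < T := (one_lt_exp_iff.2 (by linarith)).trans_le hT
  have hlogT : β + 1 ≤ log T := by rw [← log_exp (β + 1)]; exact log_le_log (exp_pos _) hT
  have hinv := exp_neg_mul_rpow_le_inv_log hT1 hβ.le
  refine le_trans (ENNReal.ofReal_le_ofReal ?_) (ofReal_div_log_mul_exp_le_hyperprior_Icc hT1
    hβ.le (by linarith [div_le_one_of_le₀ (by linarith : (1 : ℝ) ≤ log T) (by linarith)]))
  calc exp (-((3 + 4 * β) * T ^ (1 / (1 + 2 * β))))
      = exp (-((1 + 2 * β) * T ^ (1 / (1 + 2 * β))))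
          * exp (-((1 + 2 * β) * T ^ (1 / (1 + 2 * β)))) * exp (-T ^ (1 / (1 + 2 * β))) := by
        rw [← exp_add, ← exp_add]; ring_nf
    _ ≤ 1 / log T / log T * exp (-T ^ (1 / (1 + 2 * β))) := by
        rw [div_div, one_div (log T * log T), mul_inv]
        exact mul_le_mul_of_nonneg_right
          (mul_le_mul hinv hinv (exp_pos _).le (inv_nonneg.2 (log_nonneg hT1.le))) (exp_pos _).le

lemma exp_neg_add_one_mul_le_sub {K s : ℝ} (hs : 1 ≤ s) :
    exp (-((K + 1) * s)) ≤ exp (-(K * s)) - exp (-((K + 1) * s)) := by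
  rw [show -(K * s) = s + -((K + 1) * s) by ring, exp_add]
  nlinarith [add_one_le_exp s, exp_pos (-((K + 1) * s))]

lemma mul_sq_mul_rpow_neg_div {T β : ℝ} (hT : 0 < T) (hβ : 0 ≤ β) (c : ℝ) :
    T * (c * T ^ (-β / (1 + 2 * β))) ^ 2 = c ^ 2 * T ^ (1 / (1 + 2 * β)) := by
  rw [mul_pow, mul_left_comm, ← rpow_natCast (T ^ _), ← rpow_mul hT.le, mul_comm T,
    ← rpow_add_one hT.ne']
  congr 2
  field_simp
  ring

/-- Prior mass bound for the hierarchical prior with random smoothness: for each `T > e`,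
`A T` has density `λ_T(x) = C_T⁻¹ exp(-T^{1/(1+2x)})` on `[0, log T]` and is independent
of the standard normal sequence. If `Σ b_k² k^{2β} < ∞`, then there are `c, C > 0` and
`T0 > e` such that for all `T ≥ T0`, with `ε_T = c T^{-β/(1+2β)}`,
`P(‖W - b0‖₂ ≤ ε_T) ≥ exp(-C T ε_T²)`, where `W = (k^{-1/2-A T} Z_k)`. -/
theorem stmt_8 {Ω : Type*} [MeasurableSpace Ω] (P : Measure Ω) [IsProbabilityMeasure P]
    (Z : ℕ → Ω → ℝ) (hmeas : ∀ k, Measurable (Z k))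
    (hlaw : ∀ k, Measure.map (Z k) P = gaussianReal 0 1)
    (hindep : iIndepFun Z P)
    (A : ℝ → Ω → ℝ) (hAmeas : ∀ T, Measurable (A T))
    (hAlaw : ∀ T > Real.exp 1,
      Measure.map (A T) P
        = (volume.restrict (Icc (0:ℝ) (Real.log T))).withDensity
            (fun x => ENNReal.ofReal
              ((∫ y in (0:ℝ)..Real.log T, Real.exp (-(T ^ (1/(1+2*y)))))⁻¹
                * Real.exp (-(T ^ (1/(1+2*x)))))))
    (hAZ : ∀ T > Real.exp 1, IndepFun (A T) (fun ω => fun k => Z k ω) P)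
    (β : ℝ) (hβ : 0 < β)
    (b : ℕ → ℝ) (hb : Summable (fun k => (b k)^2 * ((k:ℝ)+1)^(2*β))) :
    ∃ c > 0, ∃ C > 0, ∃ T0 > Real.exp 1, ∀ T ≥ T0,
      ENNReal.ofReal (Real.exp (-C * T * (c * T^(-β/(1+2*β)))^2))
        ≤ P {ω | Summable (fun k : ℕ =>
              (((k:ℝ)+1)^(-(1/2) - A T ω) * Z k ω - b k)^2) ∧
            ∑' k : ℕ, (((k:ℝ)+1)^(-(1/2) - A T ω) * Z k ω - b k)^2
              ≤ (c * T^(-β/(1+2*β)))^2} := by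
  obtain ⟨K, hK, hcost⟩ := exists_sum_gaussianSqCost_le hβ hb
  -- Write `s = T^(1/(1+2β))`, so that `T ε_T² = c² s`. Taking `c² = K + 1` keeps the Chernoff
  -- bound `exp(-K s) - exp(-(K+1) s)` above `exp(-(K+1) s)`, and `C c² = K + 4 + 4β` also pays
  -- for the hyperprior mass `exp(-(3+4β) s)`.
  refine ⟨√(K + 1), by positivity, (K + 4 + 4 * β) / (K + 1), by positivity, exp (β + 1),
    exp_lt_exp.2 (by linarith), fun T hT => ?_⟩
  have hTe : exp 1 < T := (exp_lt_exp.2 (by linarith)).trans_le hT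
  have hT0 : 0 < T := (exp_pos 1).trans hTe
  set s := T ^ (1 / (1 + 2 * β))
  have hs : 1 ≤ s := one_le_rpow ((one_lt_exp_iff.2 one_pos).trans hTe).le (by positivity)
  set ε := √(K + 1) * T ^ (-β / (1 + 2 * β))
  have hε : T * ε ^ 2 = (K + 1) * s := by
    rw [mul_sq_mul_rpow_neg_div hT0 hβ.le, sq_sqrt (by positivity)]
  set D : Set (ℝ × (ℕ → ℝ)) :=
    {p | Summable (fun k : ℕ => (((k : ℝ) + 1) ^ (-(1 / 2) - p.1) * p.2 k - b k) ^ 2) ∧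
      ∑' k : ℕ, (((k : ℝ) + 1) ^ (-(1 / 2) - p.1) * p.2 k - b k) ^ 2 ≤ ε ^ 2}
  have hD : MeasurableSet D :=
    measurableSet_setOf_summable_and_tsum_le (fun k p => sq_nonneg _) (fun k => by fun_prop) _
  have hslice : ∀ a ∈ Icc β (β + 1 / log T),
      ENNReal.ofReal (exp (-((K + 1) * s))) ≤ P {ω | (a, fun k => Z k ω) ∈ D} := fun a ha =>
    (ENNReal.ofReal_le_ofReal (by rw [hε]; exact exp_neg_add_one_mul_le_sub hs)).trans
      (exp_neg_sub_exp_le_measure_gaussian_small_ball hmeas hlaw hindep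
        (fun k => ((k : ℝ) + 1) ^ (-(1 / 2) - a)) b hT0.le (hcost T hTe.le a ha) _)
  calc ENNReal.ofReal (exp (-((K + 4 + 4 * β) / (K + 1)) * T * ε ^ 2))
      = ENNReal.ofReal (exp (-((K + 1) * s))) * ENNReal.ofReal (exp (-((3 + 4 * β) * s))) := by
        rw [← ENNReal.ofReal_mul (exp_pos _).le, ← exp_add, mul_assoc, hε]
        congr 2
        field_simp
        ring
    _ ≤ ENNReal.ofReal (exp (-((K + 1) * s))) * P.map (A T) (Icc β (β + 1 / log T)) := by
        rw [hAlaw T hTe]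
        gcongr
        exact ofReal_exp_neg_le_hyperprior_Icc hβ hT
    _ ≤ P {ω | (A T ω, fun k => Z k ω) ∈ D} :=
        (hAZ T hTe).mul_map_le_measure (hAmeas T) (measurable_pi_lambda _ hmeas) hD
          measurableSet_Icc hslice
end

section
/- Let Φ denote the cumulative distribution function of the standard normal distribution. For every x ∈ ℝ with 0 < Φ(x) < 1/2, one has x ≥ −√( (5/2) · log(1/Φ(x)) ). Equivalently, for every y ∈ (0, 1/2), Φ^{−1}(y) ≥ −√( (5/2) · log(1/y) ). -/
open MeasureTheory ProbabilityTheory Set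

lemma gaussian_tail_bound {x : ℝ} (hx : x ≤ -1) :
    ((gaussianReal 0 1) (Iic x)).toReal ≤ Real.exp (-x ^ 2 / 2) := by
  rw [gaussianReal_apply_eq_integral 0 one_ne_zero (Iic x),
    ENNReal.toReal_ofReal (integral_nonneg fun t => gaussianPDFReal_nonneg 0 1 t)]
  have hsqrt : (1 : ℝ) ≤ Real.sqrt (2 * Real.pi * (1 : NNReal)) := by
    rw [Real.one_le_sqrt]
    · have := Real.pi_gt_three
      push_cast
      nlinarith
  have key : ∫ t in Iic x, gaussianPDFReal 0 1 t
      ≤ ∫ t in Iic x, Real.exp (-x ^ 2 / 2 - x) * Real.exp t := by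
    apply setIntegral_mono_on
    · exact (integrable_gaussianPDFReal 0 1).restrict
    · exact (integrableOn_exp_Iic x).const_mul _
    · exact measurableSet_Iic
    · intro t ht
      simp only [mem_Iic] at ht
      unfold gaussianPDFReal
      rw [← Real.exp_add]
      have h1 : Real.exp (-(t - 0) ^ 2 / (2 * ((1 : NNReal) : ℝ)))
          ≤ Real.exp (-x ^ 2 / 2 - x + t) := by
        apply Real.exp_le_exp.mpr
        push_cast
        nlinarith [mul_nonpos_of_nonneg_of_nonpos (by linarith : (0:ℝ) ≤ x - t)
          (by linarith : x + t + 2 ≤ 0)]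
      calc (Real.sqrt (2 * Real.pi * ((1 : NNReal) : ℝ)))⁻¹
            * Real.exp (-(t - 0) ^ 2 / (2 * ((1 : NNReal) : ℝ)))
          ≤ 1 * Real.exp (-x ^ 2 / 2 - x + t) := by
            apply mul_le_mul _ h1 (le_of_lt (Real.exp_pos _)) zero_le_one
            rw [inv_le_one_iff₀]
            right
            exact_mod_cast hsqrt
        _ = Real.exp (-x ^ 2 / 2 - x + t) := one_mul _
  calc ∫ t in Iic x, gaussianPDFReal 0 1 t
      ≤ ∫ t in Iic x, Real.exp (-x ^ 2 / 2 - x) * Real.exp t := key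
    _ = Real.exp (-x ^ 2 / 2 - x) * Real.exp x := by
        rw [integral_const_mul, integral_exp_Iic]
    _ = Real.exp (-x ^ 2 / 2) := by rw [← Real.exp_add]; ring_nf

/-- Lower bound for the standard normal quantile function: if `Φ` denotes the standard
normal cumulative distribution function then for every `x` with `0 < Φ(x) < 1/2`,
`x ≥ -√((5/2)·log(1/Φ(x)))`. -/
theorem stmt_13 :
    ∀ x : ℝ, 0 < ((gaussianReal 0 1) (Iic x)).toReal →
      ((gaussianReal 0 1) (Iic x)).toReal < 1/2 →
      -Real.sqrt ((5/2) * Real.log (1 / ((gaussianReal 0 1) (Iic x)).toReal)) ≤ x := by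
  intro x h0 h12
  set p : ℝ := ((gaussianReal 0 1) (Iic x)).toReal with hp
  have hlog2 : Real.log 2 < Real.log (1 / p) := by
    apply Real.log_lt_log two_pos
    rw [lt_div_iff₀ h0]
    linarith
  have hL : (2 : ℝ) / 5 < Real.log (1 / p) := by
    have := Real.log_two_gt_d9
    linarith
  by_cases hx : -1 ≤ x
  · have h1 : (1 : ℝ) ≤ Real.sqrt ((5 / 2) * Real.log (1 / p)) := by
      rw [Real.one_le_sqrt]
      linarith
    linarith
  · push_neg at hx
    have htail : p ≤ Real.exp (-x ^ 2 / 2) := gaussian_tail_bound hx.le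
    have hlogp : Real.log p ≤ -x ^ 2 / 2 := by
      rw [Real.log_le_iff_le_exp h0]
      exact htail
    have hLp : Real.log (1 / p) = -Real.log p := by
      rw [one_div, Real.log_inv]
    have hsq : x ^ 2 ≤ (5 / 2) * Real.log (1 / p) := by
      rw [hLp]
      nlinarith [sq_nonneg x]
    have := Real.sqrt_le_sqrt hsq
    rw [Real.sqrt_sq_eq_abs, abs_of_neg (by linarith : x < 0)] at this
    linarith
end
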